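/- arXiv:1608.08282 — 11 statements merged into one kernel-verified Lean document; each statement's English description precedes it below -/
import Mathlib

section
/- Let k be a field, V a k-vector space, and T a linear transformation of V. Then T is triangularizable if and only if for every finite-dimensional subspace W of V there is a nonconstant polynomial p(x) ∈ k[x] that factors into linear terms in k[x] such that p(T) annihilates W (i.e., p(T)(w) = 0 for all w ∈ W). -/
/-!
Both sides are equivalent to `V` being the sum of the generalized eigenspaces of `T`.

For `ν ≠ μ`, `T - μ` maps the generalized `ν`-eigenspace onto itself. Hence `x` lies in the sum
as soon as `(T - μ) x` does. Along a triangular basis this puts every basis vector into the sum,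
and peeling off one linear factor at a time it puts every vector killed by a nonzero split
polynomial into the sum. Conversely a vector of the generalized `μ`-eigenspace is killed by a
power of `X - μ`, and the polynomials killing finitely many vectors multiply to one killing them
all.

For the triangular basis, well-order the eigenvalues and filter `V`, lexicographically in
`(μ, n)`, by the sum of the generalized eigenspaces of the eigenvalues before `μ` and
`ker (T - μ) ^ n`. On each step `T` acts as the scalar `μ` modulo the earlier steps, so bases of
complements of the earlier steps, concatenated in order, form a triangular basis.
-/

universe u v

open Polynomial

/-- A linear transformation `T` is *triangularizable* if `V` has a basis `b` indexed by a
well-ordered set (with strict order `r`) such that `T (b i)` lies in the span of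
`{b j : j ≤ i}` for every index `i`. -/
def Triangularizable {k : Type u} {V : Type v} [Field k] [AddCommGroup V] [Module k V]
    (T : Module.End k V) : Prop :=
  ∃ (ι : Type v) (r : ι → ι → Prop) (b : Module.Basis ι k V),
    IsWellOrder ι r ∧ ∀ i, T (b i) ∈ Submodule.span k (⇑b '' {j | r j i ∨ j = i})

theorem iSupIndep_of_disjoint_biSup_lt {α ι : Type*} [CompleteLattice α] [IsModularLattice α]
    [IsCompactlyGenerated α] [LinearOrder ι] {f : ι → α}
    (h : ∀ i, Disjoint (f i) (⨆ j < i, f j)) : iSupIndep f := by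
  classical
  refine iSupIndep_iff_supIndep.mpr fun s => ?_
  induction s using Finset.induction_on_max with
  | empty => exact Finset.supIndep_empty f
  | insert i s hs ih =>
    exact ih.insert ((h i).mono_right (Finset.sup_le fun j hj => le_biSup f (hs j hj)))

namespace Module.End

variable {k : Type u} {V : Type v} [Field k] [AddCommGroup V] [Module k V] (T : Module.End k V)

theorem maxGenEigenspace_le_map_sub_smul {μ ν : k} (h : ν ≠ μ) :
    T.maxGenEigenspace ν ≤ (T.maxGenEigenspace ν).map (T - μ • 1) := by
  intro w hw
  obtain ⟨n, hn⟩ := (T.mem_maxGenEigenspace ν w).mp hw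
  have hmaps : Set.MapsTo (T - μ • (1 : Module.End k V)) (T.genEigenspace ν n)
      (T.genEigenspace ν n) :=
    mapsTo_genEigenspace_of_comm (Algebra.mul_sub_algebraMap_commutes T μ) ν n
  -- on `genEigenspace ν n`, `T - μ` is the unit `ν - μ` plus the nilpotent `T - ν`
  have hunit : IsUnit ((T - μ • 1).restrict hmaps) := by
    have hsplit : (T - μ • 1).restrict hmaps =
        algebraMap k _ (ν - μ) + (T - ν • 1).restrict (mapsTo_genEigenspace_of_comm
          (Algebra.mul_sub_algebraMap_commutes T ν) ν n) := by
      ext x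
      change (T - μ • 1) (x : V) = (ν - μ) • (x : V) + (T - ν • 1) x
      simp only [LinearMap.sub_apply, LinearMap.smul_apply, one_apply, sub_smul]
      abel
    rw [hsplit]
    exact (isNilpotent_restrict_genEigenspace_nat T ν n).isUnit_add_left_of_commute
      ((sub_ne_zero.mpr h).isUnit.map _) (Algebra.commute_algebraMap_right _ _)
  obtain ⟨u, hu⟩ := ((isUnit_iff _).mp hunit).surjective ⟨w, mem_genEigenspace_nat.mpr hn⟩
  exact ⟨u, genEigenspace_le_maximal T ν n u.2, congrArg Subtype.val hu⟩

theorem mem_maxGenEigenspace_of_sub_smul_apply_mem {μ : k} {x : V}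
    (h : (T - μ • (1 : Module.End k V)) x ∈ T.maxGenEigenspace μ) :
    x ∈ T.maxGenEigenspace μ := by
  obtain ⟨n, hn⟩ := (T.mem_maxGenEigenspace μ _).mp h
  exact (T.mem_maxGenEigenspace μ x).mpr ⟨n + 1, by rwa [pow_succ, mul_apply]⟩

theorem iSup_maxGenEigenspace_le_map_sub_smul_sup (μ : k) :
    ⨆ ν, T.maxGenEigenspace ν ≤
      (⨆ ν, T.maxGenEigenspace ν).map (T - μ • 1) ⊔ T.maxGenEigenspace μ := by
  refine iSup_le fun ν => ?_
  rcases eq_or_ne ν μ with rfl | hνμ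
  · exact le_sup_right
  · exact (T.maxGenEigenspace_le_map_sub_smul hνμ).trans
      (le_sup_of_le_left (Submodule.map_mono (le_iSup _ ν)))

theorem mem_iSup_maxGenEigenspace_of_sub_smul_apply_mem {μ : k} {x : V}
    (h : (T - μ • (1 : Module.End k V)) x ∈ ⨆ ν, T.maxGenEigenspace ν) :
    x ∈ ⨆ ν, T.maxGenEigenspace ν := by
  obtain ⟨_, ⟨u, hu, rfl⟩, e, he, hue⟩ :=
    Submodule.mem_sup.mp (T.iSup_maxGenEigenspace_le_map_sub_smul_sup μ h)
  have hxu : x - u ∈ T.maxGenEigenspace μ :=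
    T.mem_maxGenEigenspace_of_sub_smul_apply_mem (by rwa [map_sub, ← hue, add_sub_cancel_left])
  simpa using add_mem hu (Submodule.mem_iSup_of_mem μ hxu)

theorem aeval_X_sub_C (μ : k) : aeval T (X - C μ) = T - μ • 1 := by
  rw [map_sub, aeval_X, aeval_C, Algebra.algebraMap_eq_smul_one]

theorem mem_iSup_maxGenEigenspace_of_aeval_eq_zero {p : k[X]} (hp : p ≠ 0) (hsplit : p.Splits)
    {x : V} (hx : aeval T p x = 0) : x ∈ ⨆ μ, T.maxGenEigenspace μ := by
  suffices ∀ (s : Multiset k) (x : V),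
      aeval T (s.map (X - C ·)).prod x = 0 → x ∈ ⨆ μ, T.maxGenEigenspace μ by
    rw [hsplit.eq_prod_roots, map_mul, mul_apply, aeval_C, Module.algebraMap_end_apply,
      smul_eq_zero] at hx
    exact this _ x (hx.resolve_left (leadingCoeff_ne_zero.mpr hp))
  intro s
  induction s using Multiset.induction_on with
  | empty => simp +contextual
  | cons μ s ih =>
    intro x hx
    rw [Multiset.map_cons, Multiset.prod_cons, mul_comm, map_mul, mul_apply,
      aeval_X_sub_C] at hx
    exact T.mem_iSup_maxGenEigenspace_of_sub_smul_apply_mem (ih _ hx)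

def splitTorsion : Submodule k V where
  carrier := {x | ∃ p : k[X], p ≠ 0 ∧ p.Splits ∧ aeval T p x = 0}
  zero_mem' := ⟨1, one_ne_zero, Splits.one, map_zero _⟩
  add_mem' := by
    rintro x y ⟨p, hp, hps, hpx⟩ ⟨q, hq, hqs, hqy⟩
    exact ⟨p * q, mul_ne_zero hp hq, hps.mul hqs,
      sup_ker_aeval_le_ker_aeval_mul (Submodule.add_mem_sup hpx hqy)⟩
  smul_mem' := by
    rintro c x ⟨p, hp, hps, hpx⟩
    exact ⟨p, hp, hps, by rw [map_smul, hpx, smul_zero]⟩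

theorem maxGenEigenspace_le_splitTorsion (μ : k) : T.maxGenEigenspace μ ≤ T.splitTorsion := by
  intro x hx
  obtain ⟨n, hn⟩ := (T.mem_maxGenEigenspace μ x).mp hx
  exact ⟨(X - C μ) ^ n, pow_ne_zero _ (X_sub_C_ne_zero μ), (Splits.X_sub_C μ).pow n,
    by rwa [map_pow, aeval_X_sub_C]⟩

theorem iSup_maxGenEigenspace_eq_splitTorsion : ⨆ μ, T.maxGenEigenspace μ = T.splitTorsion :=
  le_antisymm (iSup_le T.maxGenEigenspace_le_splitTorsion)
    fun _ ⟨_, hp, hps, hpx⟩ => T.mem_iSup_maxGenEigenspace_of_aeval_eq_zero hp hps hpx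

theorem exists_splits_le_ker_aeval_of_fg {W : Submodule k V} (hW : W.FG)
    (h : T.splitTorsion = ⊤) :
    ∃ p : k[X], p ≠ 0 ∧ p.Splits ∧ W ≤ LinearMap.ker (aeval T p) := by
  induction W, hW using Submodule.fg_induction with
  | singleton x =>
    obtain ⟨p, hp, hps, hpx⟩ : x ∈ T.splitTorsion := h ▸ Submodule.mem_top
    exact ⟨p, hp, hps, (Submodule.span_singleton_le_iff_mem _ _).mpr hpx⟩
  | sup W₁ W₂ _ _ h₁ h₂ =>
    obtain ⟨p, hp, hps, hpW⟩ := h₁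
    obtain ⟨q, hq, hqs, hqW⟩ := h₂
    exact ⟨p * q, mul_ne_zero hp hq, hps.mul hqs,
      (sup_le_sup hpW hqW).trans Polynomial.sup_ker_aeval_le_ker_aeval_mul⟩

end Module.End

section Triangularizable

variable {k : Type u} {V : Type v} [Field k] [AddCommGroup V] [Module k V] {T : Module.End k V}

theorem triangularizable_of_basis_of_level {ι κ : Type*} [LinearOrder ι] [WellFoundedLT ι]
    (b : Module.Basis κ k V) (level : κ → ι)
    (hb : ∀ x, T (b x) ∈ Submodule.span k (b '' {y | level y < level x ∨ y = x})) :
    Triangularizable T := by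
  obtain ⟨_, _⟩ := exists_wellFoundedLT κ
  -- order `κ` by level first; the index type is moved to `range b` to land in `V`'s universe
  let e : κ ≃ Set.range b := Equiv.ofInjective b b.injective
  let g : Set.range b ↪ ι ×ₗ κ :=
    ⟨fun x => toLex (level (e.symm x), e.symm x), fun x y h => e.symm.injective (congrArg (·.2) h)⟩
  refine ⟨Set.range b, g ⁻¹'o (· < ·), b.reindexRange, (RelEmbedding.preimage g _).isWellOrder,
    fun x => ?_⟩
  obtain ⟨x, rfl⟩ := e.surjective x
  have hmono : b '' {y | level y < level x ∨ y = x} ⊆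
      b.reindexRange '' {y | (g ⁻¹'o (· < ·)) y (e x) ∨ y = e x} := by
    rintro _ ⟨y, hy, rfl⟩
    refine ⟨e y, ?_, by simp [e]⟩
    rcases hy with hy | rfl
    · left
      show toLex (level (e.symm (e y)), e.symm (e y)) < toLex (level (e.symm (e x)), e.symm (e x))
      simpa only [Equiv.symm_apply_apply] using Prod.Lex.toLex_lt_toLex.mpr (Or.inl hy)
    · exact Or.inr rfl
  simpa [e] using Submodule.span_mono hmono (hb x)

theorem triangularizable_of_filtration {ι : Type*} [LinearOrder ι] [WellFoundedLT ι]
    (F : ι → Submodule k V) (hF : Monotone F) (htop : ⨆ i, F i = ⊤) (c : ι → k)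
    (hT : ∀ i, ∀ x ∈ F i, T x - c i • x ∈ ⨆ j < i, F j) : Triangularizable T := by
  choose D hdisj hsup using fun i =>
    IsModularLattice.exists_disjoint_and_sup_eq
      (iSup₂_le fun j hj => hF hj.le : ⨆ j < i, F j ≤ F i)
  have hD : ∀ i, D i ≤ F i := fun i => hsup i ▸ le_sup_right
  have hearlier : ∀ i, ⨆ j < i, F j ≤ ⨆ j < i, D j := by
    intro i
    induction i using WellFoundedLT.induction with
    | _ i ih =>
      refine iSup₂_le fun j hj => ?_
      rw [← hsup j]
      exact sup_le ((ih j hj).trans (biSup_mono fun l hl => hl.trans hj)) (le_biSup D hj)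
  have hindep : iSupIndep D := iSupIndep_of_disjoint_biSup_lt fun i =>
    (hdisj i).symm.mono_right (iSup₂_mono fun j _ => hD j)
  have hsupD : ⨆ i, D i = ⊤ := by
    refine eq_top_iff.mpr (htop ▸ iSup_le fun i => ?_)
    rw [← hsup i]
    exact sup_le ((hearlier i).trans (iSup₂_le fun j _ => le_iSup D j)) (le_iSup D i)
  let v i := Module.Basis.ofVectorSpace k (D i)
  let b :=
    (DirectSum.isInternal_submodule_of_iSupIndep_of_iSup_eq_top hindep hsupD).collectedBasis v
  have hb : ∀ a, b a = v a.1 a.2 := fun a => by simp [b]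
  have hspan : ∀ i, D i ≤ Submodule.span k (b '' {a | a.1 = i}) := by
    intro i x hx
    refine Submodule.span_mono ?_
      (Submodule.apply_mem_span_image_of_mem_span (D i).subtype ((v i).mem_span ⟨x, hx⟩))
    rintro _ ⟨_, ⟨a, rfl⟩, rfl⟩
    exact ⟨⟨i, a⟩, rfl, hb _⟩
  have hlower : ∀ i, ⨆ j < i, D j ≤ Submodule.span k (b '' {a | a.1 < i}) := fun i =>
    iSup₂_le fun j hj => (hspan j).trans
      (Submodule.span_mono (Set.image_mono fun a (ha : a.1 = j) => (ha ▸ hj : a.1 < i)))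
  refine triangularizable_of_basis_of_level b Sigma.fst fun a => ?_
  have hmem : b a ∈ F a.1 := hD a.1 (by simp [hb])
  rw [← sub_add_cancel (T (b a)) (c a.1 • b a)]
  exact add_mem (Submodule.span_mono (Set.image_mono fun _ => Or.inl)
    (hlower a.1 (hearlier a.1 (hT a.1 _ hmem))))
    (Submodule.smul_mem _ _ (Submodule.subset_span ⟨a, Or.inr rfl, rfl⟩))

theorem Triangularizable.iSup_maxGenEigenspace_eq_top (h : Triangularizable T) :
    ⨆ μ, T.maxGenEigenspace μ = ⊤ := by
  obtain ⟨ι, r, b, hr, hb⟩ := h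
  have hmem : ∀ i, b i ∈ ⨆ μ, T.maxGenEigenspace μ := fun i => by
    induction i using hr.wf.induction with
    | _ i ih =>
      have hlower : Submodule.span k (b '' {j | r j i}) ≤ ⨆ μ, T.maxGenEigenspace μ :=
        Submodule.span_le.mpr (Set.image_subset_iff.mpr ih)
      have hTb := hb i
      rw [show {j | r j i ∨ j = i} = insert i {j | r j i} by ext; simp [or_comm],
        Set.image_insert_eq, Submodule.span_insert, Submodule.mem_sup] at hTb
      obtain ⟨_, hy, z, hz, hyz⟩ := hTb
      obtain ⟨c, rfl⟩ := Submodule.mem_span_singleton.mp hy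
      have hTb : (T - c • 1) (b i) = z := by simp [← hyz]
      exact T.mem_iSup_maxGenEigenspace_of_sub_smul_apply_mem (hTb ▸ hlower hz)
  exact eq_top_iff.mpr (b.span_eq ▸ Submodule.span_le.mpr (Set.range_subset_iff.mpr hmem))

theorem triangularizable_of_iSup_maxGenEigenspace_eq_top (h : ⨆ μ, T.maxGenEigenspace μ = ⊤) :
    Triangularizable T := by
  obtain ⟨_, _⟩ := exists_wellFoundedLT k
  -- the eigenvalue `μ` contributes the chain `ker (T - μ) ^ n`, stacked on the generalized
  -- eigenspaces of the eigenvalues before `μ`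
  let A μ := ⨆ ν < μ, T.maxGenEigenspace ν
  let F : k ×ₗ ℕ → Submodule k V := fun i =>
    A (ofLex i).1 ⊔ T.genEigenspace (ofLex i).1 (ofLex i).2
  have hA : ∀ μ n, A μ ≤ ⨆ j < toLex (μ, n), F j := fun μ n =>
    iSup₂_le fun ν hν => by
      rw [← Module.End.iSup_genEigenspace_eq]
      exact iSup_le fun m => le_iSup₂_of_le (toLex (ν, m))
        (Prod.Lex.toLex_lt_toLex.mpr (Or.inl hν)) le_sup_right
  have hAinv : ∀ μ, A μ ≤ (A μ).comap (T - μ • 1) := fun μ =>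
    iSup₂_le fun ν hν x hx => le_iSup₂ (f := fun ν (_ : ν < μ) => T.maxGenEigenspace ν) ν hν
      (Module.End.mapsTo_maxGenEigenspace_of_comm (Algebra.mul_sub_algebraMap_commutes T μ) ν hx)
  refine triangularizable_of_filtration F ?_ ?_ (fun i => (ofLex i).1) ?_
  · intro i j hle
    show A (ofLex i).1 ⊔ T.genEigenspace (ofLex i).1 (ofLex i).2 ≤
      A (ofLex j).1 ⊔ T.genEigenspace (ofLex j).1 (ofLex j).2
    rcases Prod.Lex.le_iff.mp hle with hlt | ⟨heq, hle⟩
    · refine sup_le ?_ ((Module.End.genEigenspace_le_maximal T _ _).trans ?_)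
      · exact (biSup_mono fun ν hν => hν.trans hlt).trans le_sup_left
      · exact (le_iSup₂ (f := fun μ (_ : μ < (ofLex j).1) => T.maxGenEigenspace μ) _ hlt).trans
          le_sup_left
    · rw [heq]
      exact sup_le_sup_left ((T.genEigenspace _).monotone (Nat.cast_le.mpr hle)) _
  · rw [eq_top_iff, ← h]
    refine iSup_le fun μ => ?_
    rw [← Module.End.iSup_genEigenspace_eq]
    exact iSup_le fun n => le_iSup_of_le (toLex (μ, n)) le_sup_right
  · rintro ⟨μ, n⟩ x hx
    change x ∈ A μ ⊔ T.genEigenspace μ n at hx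
    change T x - μ • x ∈ ⨆ j < toLex (μ, n), F j
    obtain ⟨a, ha, y, hy, rfl⟩ := Submodule.mem_sup.mp hx
    suffices (T - μ • 1) (a + y) ∈ ⨆ j < toLex (μ, n), F j by simpa using this
    refine map_add (T - μ • 1) a y ▸ add_mem (hA μ n (hAinv μ ha)) ?_
    cases n with
    | zero => simp_all
    | succ n =>
      have hy' : (T - μ • 1) y ∈ T.genEigenspace μ n := by
        rw [Module.End.mem_genEigenspace_nat, LinearMap.mem_ker] at hy ⊢
        rwa [← Module.End.mul_apply, ← pow_succ]
      have hlt : toLex (μ, n) < toLex (μ, n + 1) :=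
        Prod.Lex.toLex_lt_toLex.mpr (Or.inr ⟨rfl, n.lt_succ_self⟩)
      exact le_iSup₂_of_le (f := fun j (_ : j < toLex (μ, n + 1)) => F j) _ hlt
        (le_sup_right : T.genEigenspace μ n ≤ A μ ⊔ _) hy'

theorem triangularizable_iff_iSup_maxGenEigenspace_eq_top :
    Triangularizable T ↔ ⨆ μ, T.maxGenEigenspace μ = ⊤ :=
  ⟨Triangularizable.iSup_maxGenEigenspace_eq_top, triangularizable_of_iSup_maxGenEigenspace_eq_top⟩

end Triangularizable

/-- `T` is triangularizable iff every finite-dimensional subspace `W` of `V` is annihilated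
by `p(T)` for some nonconstant polynomial `p` that factors into linear terms in `k[x]`. -/
theorem triangularizable_iff_forall_finiteDimensional_annihilated
    {k : Type u} {V : Type v} [Field k] [AddCommGroup V] [Module k V]
    (T : Module.End k V) :
    Triangularizable T ↔
      ∀ W : Submodule k V, FiniteDimensional k W →
        ∃ p : k[X], p.natDegree ≠ 0 ∧ p.Splits ∧
          ∀ w ∈ W, (aeval T p) w = 0 := by
  rw [triangularizable_iff_iSup_maxGenEigenspace_eq_top, T.iSup_maxGenEigenspace_eq_splitTorsion]
  constructor
  · intro h W hW
    obtain ⟨p, hp, hps, hpW⟩ :=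
      T.exists_splits_le_ker_aeval_of_fg ((Submodule.fg_iff_finiteDimensional W).mpr hW) h
    refine ⟨X * p, ?_, Splits.X.mul hps, fun w hw => ?_⟩
    · rw [natDegree_mul X_ne_zero hp, natDegree_X]
      omega
    · rw [map_mul, Module.End.mul_apply, hpW hw, map_zero]
  · intro h
    refine eq_top_iff.mpr fun x _ => ?_
    obtain ⟨p, hp, hps, hpx⟩ := h (k ∙ x) inferInstance
    exact ⟨p, fun h0 => hp (h0 ▸ natDegree_zero), hps,
      hpx x (Submodule.mem_span_singleton_self x)⟩
end

section
/- Let k be a field, V a k-vector space, and T a linear transformation of V. Then T is triangularizable if and only if there exists a set X of T-invariant subspaces of V that is well-ordered by set inclusion and that is maximal as a well-ordered set of subspaces of V, i.e., every subspace W of V such that X ∪ {W} is well-ordered by inclusion already belongs to X. -/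
/-!
A maximal chain `X` of subspaces that is well-ordered by inclusion is closed under suprema, and
each `A ∈ X` other than `⊤` is covered by its successor in `X`, which is then `K ∙ v ⊔ A` for any
vector `v` of the successor outside `A`. Choosing such a `v_A` for every `A ∈ X \ {⊤}` gives a
basis, linearly independent because `v_A ∉ A ⊇ span {v_C | C < A}` and spanning because otherwise
the supremum of the members of `X` inside the span would have its successor inside the span too.
If `X` consists of `T`-invariant subspaces, `T v_A` lies in the successor of `A`, which is spanned
by the `v_C` with `C ≤ A`. Conversely, for a triangular basis indexed by a well-order the spans of
the lower sets of indices are `T`-invariant, and they form a maximal chain by the same criterion: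
they are closed under unions, and the span of `Iio i` is covered by the span of `Iic i`.
-/

universe u v

open Polynomial

/-- A set of subspaces of `V` is well-ordered by inclusion if inclusion is a total order on it
in which every nonempty subset has a least element. -/
def WellOrderedByInclusion {k : Type u} {V : Type v} [Field k] [AddCommGroup V] [Module k V]
    (X : Set (Submodule k V)) : Prop :=
  (∀ A ∈ X, ∀ B ∈ X, A ≤ B ∨ B ≤ A) ∧
    ∀ Y ⊆ X, Y.Nonempty → ∃ A ∈ Y, ∀ B ∈ Y, A ≤ B

open Set Submodule

section CompleteLattice

variable {α : Type*} [CompleteLattice α] {X : Set α}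

theorem IsMaxChain.mem_of_forall_comparable (hX : IsMaxChain (· ≤ ·) X) {w : α}
    (hw : ∀ x ∈ X, x ≤ w ∨ w ≤ x) : w ∈ X := by
  rw [hX.2 (hX.1.insert fun x hx _ => (hw x hx).symm) (subset_insert w X)]
  exact mem_insert w X

theorem IsChain.isMaxChain_of_sSup_mem_of_covBy (hX : IsChain (· ≤ ·) X)
    (hsup : ∀ Y ⊆ X, sSup Y ∈ X) (hcov : ∀ a ∈ X, a ≠ ⊤ → ∃ b ∈ X, a ⋖ b) :
    IsMaxChain (· ≤ ·) X := by
  refine ⟨hX, fun t ht hXt => subset_antisymm hXt fun w hw => ?_⟩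
  set a := sSup {x ∈ X | x ≤ w}
  have haX : a ∈ X := hsup _ fun x hx => hx.1
  obtain haw | haw := (sSup_le fun x hx => hx.2 : a ≤ w).eq_or_lt
  · exact haw ▸ haX
  obtain ⟨b, hbX, hab⟩ := hcov a haX haw.ne_top
  have hbw : ¬b ≤ w := fun h => hab.lt.not_ge (le_sSup ⟨hbX, h⟩)
  have hwb : w ≤ b := (ht.total (hXt hbX) hw).resolve_left hbw
  exact (hab.2 haw (lt_of_le_not_ge hwb hbw)).elim

theorem IsMaxChain.sSup_mem (hX : IsMaxChain (· ≤ ·) X) {Y : Set α} (hY : Y ⊆ X) :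
    sSup Y ∈ X := by
  refine hX.mem_of_forall_comparable fun x hx => ?_
  by_cases h : ∀ y ∈ Y, y ≤ x
  · exact Or.inr (sSup_le h)
  push Not at h
  obtain ⟨y, hy, hyx⟩ := h
  exact Or.inl (((hX.1.total hx (hY hy)).resolve_right hyx).trans (le_sSup hy))

/-- The cover of `a` is its successor: the least element of `X` strictly above `a`. -/
theorem IsMaxChain.exists_covBy (hX : IsMaxChain (· ≤ ·) X) (hwf : X.IsWF) {a : α}
    (ha : a ∈ X) (ha' : a ≠ ⊤) : ∃ b ∈ X, a ⋖ b := by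
  have hne : {x ∈ X | a < x}.Nonempty := ⟨⊤, hX.top_mem, ha'.lt_top⟩
  have hwf' : {x ∈ X | a < x}.IsWF := hwf.mono (sep_subset X _)
  obtain ⟨hbX, hab⟩ := hwf'.min_mem hne
  refine ⟨_, hbX, hab, fun c hac hcb => hwf'.not_lt_min hne ⟨?_, hac⟩ hcb⟩
  refine hX.mem_of_forall_comparable fun x hx => ?_
  by_cases hax : a < x
  · exact Or.inr (hcb.le.trans (hX.1.le_of_not_gt hx hbX (hwf'.not_lt_min hne ⟨hx, hax⟩)))
  · exact Or.inl ((hX.1.le_of_not_gt ha hx hax).trans hac.le)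

end CompleteLattice

section WellOrderedByInclusion

variable {K V : Type*} [Field K] [AddCommGroup V] [Module K V] {X : Set (Submodule K V)}

theorem wellOrderedByInclusion_iff :
    WellOrderedByInclusion X ↔ IsChain (· ≤ ·) X ∧ X.IsWF := by
  refine ⟨fun ⟨htot, hleast⟩ => ⟨fun A hA B hB _ => htot A hA B hB, ?_⟩,
    fun ⟨hX, hwf⟩ => ⟨fun A hA B hB => hX.total hA hB, fun Y hY hne => ?_⟩⟩
  · refine WellFounded.wellFounded_iff_has_min.2 fun s ⟨x, hx⟩ => ?_
    obtain ⟨_, ⟨a, has, rfl⟩, ha⟩ :=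
      hleast (Subtype.val '' s) (image_subset_iff.2 fun y _ => y.2) ⟨x, x, hx, rfl⟩
    exact ⟨a, has, fun y hy => (ha y ⟨y, hy, rfl⟩).not_gt⟩
  · have hwf' : Y.IsWF := hwf.mono hY
    exact ⟨_, hwf'.min_mem hne, fun B hB =>
      hX.le_of_not_gt (hY hB) (hY (hwf'.min_mem hne)) (hwf'.not_lt_min hne hB)⟩

theorem WellOrderedByInclusion.isMaxChain_iff (hX : WellOrderedByInclusion X) :
    IsMaxChain (· ≤ ·) X ↔ ∀ W, WellOrderedByInclusion (insert W X) → W ∈ X := by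
  refine ⟨fun hmax W hW => ?_, fun hmax => ⟨(wellOrderedByInclusion_iff.1 hX).1, ?_⟩⟩
  · rw [hmax.2 (wellOrderedByInclusion_iff.1 hW).1 (subset_insert W X)]
    exact mem_insert W X
  · refine fun t ht hXt => subset_antisymm hXt fun W hW => hmax W ?_
    exact wellOrderedByInclusion_iff.2
      ⟨ht.mono (insert_subset hW hXt), (wellOrderedByInclusion_iff.1 hX).2.insert W⟩

end WellOrderedByInclusion

theorem linearIndependent_of_notMem_span_image_Iio {K V ι : Type*} [Field K] [AddCommGroup V]
    [Module K V] [LinearOrder ι] {v : ι → V} (hv : ∀ i, v i ∉ span K (v '' Iio i)) :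
    LinearIndependent K v := by
  classical
  refine linearIndepOn_univ_iff.1 (linearIndepOn_of_finite _ fun t _ ht => ?_)
  lift t to Finset ι using ht
  induction t using Finset.induction_on_max with
  | empty => simp
  | insert i t hlt ih =>
    rw [Finset.coe_insert, linearIndepOn_insert fun hi => (hlt i hi).false]
    exact ⟨ih (subset_univ _), fun h => hv i (span_mono (image_mono hlt) h)⟩

theorem triangularizable_iff_exists_linearOrder {K : Type u} {V : Type v} [Field K]
    [AddCommGroup V] [Module K V] (T : Module.End K V) :
    Triangularizable T ↔ ∃ (ι : Type v) (_ : LinearOrder ι) (_ : WellFoundedLT ι)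
      (b : Module.Basis ι K V), ∀ i, T (b i) ∈ span K (b '' Iic i) := by
  constructor
  · rintro ⟨ι, r, b, hr, htri⟩
    let := IsWellOrder.linearOrder r
    refine ⟨ι, inferInstance, ⟨hr.wf⟩, b, fun i => ?_⟩
    convert htri i using 4
    ext j
    -- in `IsWellOrder.linearOrder r`, `j ≤ i` is by definition `j = i ∨ r j i`
    exact Or.comm
  · rintro ⟨ι, _, _, b, htri⟩
    refine ⟨ι, (· < ·), b, inferInstance, fun i => ?_⟩
    simpa only [Iic, le_iff_lt_or_eq] using htri i

theorem exists_isLeast_of_forall_isLowerSet {ι : Type*} [LinearOrder ι] [WellFoundedLT ι]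
    {𝒮 : Set (Set ι)} (h𝒮 : ∀ S ∈ 𝒮, IsLowerSet S) (hne : 𝒮.Nonempty) : ∃ S, IsLeast 𝒮 S := by
  by_cases hD : (⋃ S ∈ 𝒮, Sᶜ).Nonempty
  · obtain ⟨S, hS, hiS⟩ := mem_iUnion₂.1 (wellFounded_lt.min_mem _ hD)
    refine ⟨S, hS, fun T hT j hj => by_contra fun hjT => hiS ?_⟩
    exact h𝒮 S hS (wellFounded_lt.min_le (mem_iUnion₂.2 ⟨T, hT, hjT⟩)) hj
  · obtain ⟨S, hS⟩ := hne
    exact ⟨S, hS, fun T hT j _ => by_contra fun hjT => hD ⟨j, mem_iUnion₂.2 ⟨T, hT, hjT⟩⟩⟩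

section LowerSpans

variable {K V ι : Type*} [Field K] [AddCommGroup V] [Module K V] [LinearOrder ι]
  (b : Module.Basis ι K V)

def lowerSpans : Set (Submodule K V) :=
  (fun S => span K (b '' S)) '' {S | IsLowerSet S}

theorem apply_mem_of_mem_lowerSpans {T : Module.End K V}
    (htri : ∀ i, T (b i) ∈ span K (b '' Iic i)) : ∀ A ∈ lowerSpans b, ∀ v ∈ A, T v ∈ A := by
  rintro _ ⟨S, hS, rfl⟩ v hv
  have hle : span K (b '' S) ≤ (span K (b '' S)).comap T := by
    refine span_le.2 ?_
    rintro _ ⟨i, hi, rfl⟩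
    exact span_mono (image_mono (hS.Iic_subset hi)) (htri i)
  exact hle hv

theorem wellOrderedByInclusion_lowerSpans [WellFoundedLT ι] :
    WellOrderedByInclusion (lowerSpans b) := by
  refine ⟨?_, fun Y hY ⟨A, hA⟩ => ?_⟩
  · rintro _ ⟨S, hS, rfl⟩ _ ⟨T, hT, rfl⟩
    exact (hS.total hT).imp (fun h => span_mono (image_mono h)) fun h => span_mono (image_mono h)
  obtain ⟨S₀, hS₀, rfl⟩ := hY hA
  obtain ⟨S, ⟨-, hSY⟩, hleast⟩ := exists_isLeast_of_forall_isLowerSet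
    (𝒮 := {S | IsLowerSet S ∧ span K (b '' S) ∈ Y}) (fun S hS => hS.1) ⟨S₀, hS₀, hA⟩
  refine ⟨_, hSY, fun B hB => ?_⟩
  obtain ⟨T, hT, rfl⟩ := hY hB
  exact span_mono (image_mono (hleast ⟨hT, hB⟩))

theorem sSup_mem_lowerSpans {Y : Set (Submodule K V)} (hY : Y ⊆ lowerSpans b) :
    sSup Y ∈ lowerSpans b := by
  set 𝒮 := {S | IsLowerSet S ∧ span K (b '' S) ∈ Y}
  refine ⟨⋃₀ 𝒮, isLowerSet_sUnion fun S hS => hS.1, le_antisymm ?_ ?_⟩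
  · refine span_le.2 ?_
    rintro _ ⟨i, ⟨S, hS, hi⟩, rfl⟩
    exact le_sSup hS.2 (subset_span ⟨i, hi, rfl⟩)
  · refine sSup_le fun A hA => ?_
    obtain ⟨S, hS, rfl⟩ := hY hA
    exact span_mono (image_mono (subset_sUnion_of_mem ⟨hS, hA⟩))

theorem exists_covBy_mem_lowerSpans [WellFoundedLT ι] {A : Submodule K V}
    (hA : A ∈ lowerSpans b) (hA' : A ≠ ⊤) : ∃ B ∈ lowerSpans b, A ⋖ B := by
  obtain ⟨S, hS, rfl⟩ := hA
  obtain rfl | ⟨i, rfl⟩ := hS.eq_univ_or_Iio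
  · simp [b.span_eq] at hA'
  refine ⟨span K (b '' Iic i), ⟨Iic i, isLowerSet_Iic i, rfl⟩, ?_⟩
  rw [← Iio_insert, image_insert_eq, span_insert]
  exact covBy_span_singleton_sup (b.linearIndependent.notMem_span_image (lt_irrefl i))

theorem isMaxChain_lowerSpans [WellFoundedLT ι] : IsMaxChain (· ≤ ·) (lowerSpans b) :=
  (wellOrderedByInclusion_iff.1 (wellOrderedByInclusion_lowerSpans b)).1
    |>.isMaxChain_of_sSup_mem_of_covBy (fun _ => sSup_mem_lowerSpans b)
      fun _ => exists_covBy_mem_lowerSpans b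

end LowerSpans

section MaxChain

variable {K : Type*} {V : Type v} [Field K] [AddCommGroup V] [Module K V]
  {X : Set (Submodule K V)}

theorem span_singleton_sup_eq_of_covBy {A B : Submodule K V} (hAB : A ⋖ B) {x : V}
    (hxB : x ∈ B) (hxA : x ∉ A) : K ∙ x ⊔ A = B := by
  refine (hAB.wcovBy.eq_or_eq le_sup_right ?_).resolve_left (covBy_span_singleton_sup hxA).lt.ne'
  exact sup_le ((span_singleton_le_iff_mem x B).2 hxB) hAB.le

theorem le_span_image_of_mem (hX : IsChain (· ≤ ·) X) (hsup : ∀ Y ⊆ X, sSup Y ∈ X)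
    {v : Submodule K V → V} (hv : ∀ A ∈ X, A ≠ ⊤ → v A ∉ A ∧ K ∙ v A ⊔ A ∈ X)
    {B : Submodule K V} (hB : B ∈ X) : B ≤ span K (v '' {A ∈ X | A < B}) := by
  set U := span K (v '' {A ∈ X | A < B})
  set A := sSup {C ∈ X | C ≤ U}
  have hAX : A ∈ X := hsup _ fun C hC => hC.1
  have hAU : A ≤ U := sSup_le fun C hC => hC.2
  by_contra hBU
  have hAB : A < B := by
    refine lt_of_le_of_ne ((hX.total hAX hB).resolve_right fun h => hBU (h.trans hAU)) ?_
    exact fun h => hBU (h ▸ hAU)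
  obtain ⟨hvA, hsucc⟩ := hv A hAX hAB.ne_top
  have hsuccU : K ∙ v A ⊔ A ≤ U :=
    sup_le ((span_singleton_le_iff_mem _ _).2 (subset_span (mem_image_of_mem v ⟨hAX, hAB⟩))) hAU
  have hsuccA : K ∙ v A ⊔ A ≤ A := le_sSup ⟨hsucc, hsuccU⟩
  exact hvA (hsuccA (mem_sup_left (mem_span_singleton_self _)))

theorem exists_basis_triangular_of_isMaxChain {T : Module.End K V}
    (hinv : ∀ A ∈ X, ∀ v ∈ A, T v ∈ A) (hX : IsMaxChain (· ≤ ·) X) (hwf : X.IsWF) :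
    ∃ (ι : Type v) (_ : LinearOrder ι) (_ : WellFoundedLT ι) (b : Module.Basis ι K V),
      ∀ i, T (b i) ∈ span K (b '' Iic i) := by
  classical
  have hgen : ∀ A ∈ X, A ≠ ⊤ → ∃ x, x ∉ A ∧ K ∙ x ⊔ A ∈ X := fun A hA hA' => by
    obtain ⟨B, hB, hAB⟩ := hX.exists_covBy hwf hA hA'
    obtain ⟨x, hxB, hxA⟩ := SetLike.exists_of_lt hAB.lt
    exact ⟨x, hxA, span_singleton_sup_eq_of_covBy hAB hxB hxA ▸ hB⟩
  choose! v hv using hgen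
  have hspan : ∀ B ∈ X, B ≤ span K (v '' {A ∈ X | A < B}) := fun _ =>
    le_span_image_of_mem hX.1 (fun _ => hX.sSup_mem) hv
  have hvmem : ∀ A ∈ X, A ≠ ⊤ → ∀ C ∈ X, A < C → v A ∈ C := fun A hA hA' C hC hAC =>
    have hcov := covBy_span_singleton_sup (hv A hA hA').1
    hX.1.le_of_not_gt hC (hv A hA hA').2 (fun hCs => hcov.2 hAC hCs)
      (mem_sup_left (mem_span_singleton_self _))
  let ι := {A ∈ X | A < ⊤}
  let : LinearOrder ι := (hX.1.mono (sep_subset X _)).linearOrder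
  have : WellFoundedLT ι := ⟨hwf.mono (sep_subset X _)⟩
  have hli : LinearIndependent K (v ∘ Subtype.val : ι → V) := by
    refine linearIndependent_of_notMem_span_image_Iio fun A h => (hv A A.2.1 A.2.2.ne).1 ?_
    refine span_le.2 ?_ h
    rintro _ ⟨C, hC, rfl⟩
    exact hvmem C C.2.1 C.2.2.ne A A.2.1 hC
  have hsp : ⊤ ≤ span K (range (v ∘ Subtype.val : ι → V)) := by
    rw [range_comp, Subtype.range_coe]
    exact hspan ⊤ hX.top_mem
  refine ⟨ι, inferInstance, inferInstance, .mk hli hsp, fun A => ?_⟩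
  obtain ⟨hvA, hsucc⟩ := hv A A.2.1 A.2.2.ne
  rw [Module.Basis.coe_mk]
  refine span_mono ?_ (hspan _ hsucc (hinv _ hsucc _ (mem_sup_left (mem_span_singleton_self _))))
  rintro _ ⟨C, ⟨hC, hCs⟩, rfl⟩
  exact ⟨⟨C, hC, hCs.trans_le le_top⟩,
    hX.1.le_of_not_gt A.2.1 hC fun hAC => (covBy_span_singleton_sup hvA).2 hAC hCs, rfl⟩

end MaxChain

/-- `T` is triangularizable iff there is a set of `T`-invariant subspaces of `V` that is
well-ordered by inclusion and maximal as a well-ordered set of subspaces of `V`. -/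
theorem triangularizable_iff_exists_maximal_wellOrdered_invariant_set
    {k : Type u} {V : Type v} [Field k] [AddCommGroup V] [Module k V]
    (T : Module.End k V) :
    Triangularizable T ↔
      ∃ X : Set (Submodule k V),
        (∀ A ∈ X, ∀ v ∈ A, T v ∈ A) ∧ WellOrderedByInclusion X ∧
          ∀ W : Submodule k V, WellOrderedByInclusion (insert W X) → W ∈ X := by
  rw [triangularizable_iff_exists_linearOrder]
  constructor
  · rintro ⟨ι, _, _, b, htri⟩
    have hwo := wellOrderedByInclusion_lowerSpans b
    exact ⟨lowerSpans b, apply_mem_of_mem_lowerSpans b htri, hwo,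
      hwo.isMaxChain_iff.1 (isMaxChain_lowerSpans b)⟩
  · rintro ⟨X, hinv, hwo, hmax⟩
    exact exists_basis_triangular_of_isMaxChain hinv (hwo.isMaxChain_iff.2 hmax)
      (wellOrderedByInclusion_iff.1 hwo).2
end

section
/- Let k be a field, V a k-vector space, and T a linear transformation of V. Then T is triangularizable if and only if there exists a basis (b_i)_{i∈I} of V indexed by a partially ordered set I such that T is triangular with respect to (b_i)_{i∈I} and, for every i ∈ I, the set {j ∈ I : j ≤ i} is finite. -/
/-!
Given a triangularizing well-order, order the basis by the reflexive-transitive closure of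
"`b j` occurs in `T (b i)`": this relation is contained in the well-order, so its closure is
a partial order, and each down-set is finite by well-founded induction, since every step down
has only finitely many choices. Conversely, finite down-sets make `<` well-founded, and any
well-founded order extends to a well-order.
-/

universe u v

open Polynomial

namespace Relation

variable {α : Type*} {c : α → α → Prop}

abbrev reflTransGenPartialOrder (hc : WellFounded c) : PartialOrder α where
  le := ReflTransGen c
  le_refl _ := .refl
  le_trans _ _ _ := ReflTransGen.trans
  le_antisymm a b hab hba := by
    by_contra hne
    have hab' := (reflTransGen_iff_eq_or_transGen.mp hab).resolve_left (Ne.symm hne)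
    have hba' := (reflTransGen_iff_eq_or_transGen.mp hba).resolve_left hne
    exact hc.transGen.irrefl.irrefl a (hab'.trans hba')

theorem finite_setOf_reflTransGen (hc : WellFounded c) (hfin : ∀ a, {b | c b a}.Finite)
    (a : α) : {b | ReflTransGen c b a}.Finite := by
  induction a using hc.induction with
  | _ a ih =>
    refine ((hfin a).biUnion ih).insert a |>.subset fun b hb => ?_
    rcases hb.cases_tail with rfl | ⟨m, hbm, hma⟩
    · exact Set.mem_insert _ _
    · exact Or.inr (Set.mem_biUnion hma hbm)

end Relation

theorem wellFoundedLT_of_finite_Iic {ι : Type*} [Preorder ι] (h : ∀ i : ι, (Set.Iic i).Finite) :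
    WellFoundedLT ι :=
  StrictMono.wellFoundedLT (f := fun i => (Set.Iic i).ncard) fun _ i hji =>
    Set.ncard_lt_ncard (Set.Iic_ssubset_Iic.mpr hji) (h i)

namespace Module.Basis

variable {ι k V : Type*} [Field k] [AddCommGroup V] [Module k V]
  (b : Basis ι k V) (T : Module.End k V)

def offDiagSupport (j i : ι) : Prop :=
  j ≠ i ∧ b.repr (T (b i)) j ≠ 0

variable {b T}

theorem offDiagSupport_le {r : ι → ι → Prop}
    (htri : ∀ i, T (b i) ∈ Submodule.span k (b '' {j | r j i ∨ j = i})) :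
    b.offDiagSupport T ≤ r := fun _ i ⟨hne, hji⟩ =>
  (b.mem_span_image.mp (htri i) (Finsupp.mem_support_iff.mpr hji)).resolve_right hne

theorem finite_setOf_offDiagSupport (i : ι) : {j | b.offDiagSupport T j i}.Finite :=
  (b.repr (T (b i))).support.finite_toSet.subset fun _ hj => Finsupp.mem_support_iff.mpr hj.2

variable (b T) in
theorem mem_span_image_reflTransGen_offDiagSupport (i : ι) :
    T (b i) ∈ Submodule.span k (b '' {j | Relation.ReflTransGen (b.offDiagSupport T) j i}) := by
  refine b.mem_span_image.mpr fun j hj => ?_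
  by_cases hji : j = i
  · exact hji ▸ .refl
  · exact .single ⟨hji, Finsupp.mem_support_iff.mp hj⟩

theorem exists_partialOrder_finite_Iic_of_wellFounded {r : ι → ι → Prop} (hr : WellFounded r)
    (htri : ∀ i, T (b i) ∈ Submodule.span k (b '' {j | r j i ∨ j = i})) :
    ∃ po : PartialOrder ι, (∀ i, T (b i) ∈ Submodule.span k (b '' {j | po.le j i})) ∧
      ∀ i, {j | po.le j i}.Finite := by
  have hwf : WellFounded (b.offDiagSupport T) := Subrelation.wf (offDiagSupport_le htri _ _) hr
  exact ⟨Relation.reflTransGenPartialOrder hwf, b.mem_span_image_reflTransGen_offDiagSupport T,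
    Relation.finite_setOf_reflTransGen hwf finite_setOf_offDiagSupport⟩

end Module.Basis

theorem triangularizable_of_wellFoundedLT {k : Type u} {V : Type v} [Field k] [AddCommGroup V]
    [Module k V] {T : Module.End k V} {ι : Type v} [PartialOrder ι] [WellFoundedLT ι]
    (b : Module.Basis ι k V) (htri : ∀ i, T (b i) ∈ Submodule.span k (b '' Set.Iic i)) :
    Triangularizable T := by
  obtain ⟨r, hltr, hr⟩ := IsWellFounded.exists_well_order_ge (α := ι) (· < ·)
  refine ⟨ι, r, b, hr, fun i => Submodule.span_mono (Set.image_mono fun j hj => ?_) (htri i)⟩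
  exact (eq_or_lt_of_le hj).elim Or.inr fun h => Or.inl (hltr _ _ h)

/-- `T` is triangularizable iff there is a basis of `V` indexed by a partially ordered set,
with respect to which `T` is triangular, and in which every principal down-set is finite. -/
theorem triangularizable_iff_exists_partialOrder_basis_finite_downsets
    {k : Type u} {V : Type v} [Field k] [AddCommGroup V] [Module k V]
    (T : Module.End k V) :
    Triangularizable T ↔
      ∃ (ι : Type v) (po : PartialOrder ι) (b : Module.Basis ι k V),
        (∀ i, T (b i) ∈ Submodule.span k (⇑b '' {j | po.le j i})) ∧
          ∀ i, {j | po.le j i}.Finite := by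
  constructor
  · rintro ⟨ι, r, b, hr, htri⟩
    obtain ⟨po, hpo, hfin⟩ := b.exists_partialOrder_finite_Iic_of_wellFounded hr.wf htri
    exact ⟨ι, po, b, hpo, hfin⟩
  · rintro ⟨ι, po, b, htri, hfin⟩
    let := po
    have := wellFoundedLT_of_finite_Iic hfin
    exact triangularizable_of_wellFoundedLT b htri
end

section
/- Let k be a field, V a k-vector space, and T a linear transformation of V that is triangular with respect to some well-ordered basis of V. Then every finite-dimensional subspace W of V is contained in a finite-dimensional T-invariant subspace of V. -/
/-!
The vectors lying in some finitely generated `T`-invariant submodule form a submodule, because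
such submodules are closed under `⊔`. By well-founded induction every basis vector `b i` lies in
it: `T (b i)` is a multiple of `b i` plus a combination of earlier basis vectors, which lie in
some finitely generated invariant `U`, and then `R ∙ b i ⊔ U` is again finitely generated and
invariant. So this submodule is everything, and a finite-dimensional `W`, being spanned by
finitely many vectors, lies in the sup of finitely many finitely generated invariant submodules.
-/

universe u v

open Submodule

namespace Module.End

variable {R M : Type*} [Semiring R] [AddCommMonoid M] [Module R M] (T : End R M)

def locallyFiniteSubmodule : Submodule R M where
  carrier := {v | ∃ U ∈ T.invtSubmodule, U.FG ∧ v ∈ U}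
  zero_mem' := ⟨⊥, invtSubmodule.bot_mem T, fg_bot, zero_mem _⟩
  add_mem' := by
    rintro v w ⟨U, hU, hUfg, hv⟩ ⟨U', hU', hU'fg, hw⟩
    exact ⟨U ⊔ U', invtSubmodule.sup_mem hU hU', hUfg.sup hU'fg,
      add_mem (mem_sup_left hv) (mem_sup_right hw)⟩
  smul_mem' c _ := fun ⟨U, hU, hUfg, hv⟩ => ⟨U, hU, hUfg, U.smul_mem c hv⟩

variable {T}

theorem mem_locallyFiniteSubmodule {v : M} :
    v ∈ T.locallyFiniteSubmodule ↔ ∃ U ∈ T.invtSubmodule, U.FG ∧ v ∈ U :=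
  Iff.rfl

theorem mem_locallyFiniteSubmodule_of_apply_mem_sup {v : M}
    (h : T v ∈ (R ∙ v) ⊔ T.locallyFiniteSubmodule) : v ∈ T.locallyFiniteSubmodule := by
  obtain ⟨x, hx, w, hw, hTv⟩ := mem_sup.1 h
  obtain ⟨U, hU, hUfg, hw⟩ := mem_locallyFiniteSubmodule.1 hw
  have hTv_mem : T v ∈ (R ∙ v) ⊔ U := by
    rw [← hTv]
    exact add_mem (mem_sup_left hx) (mem_sup_right hw)
  have hinv : (R ∙ v) ⊔ U ∈ T.invtSubmodule := (mem_invtSubmodule T).2 <|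
    sup_le ((span_singleton_le_iff_mem _ _).2 hTv_mem)
      ((mem_invtSubmodule T).1 hU |>.trans (comap_mono le_sup_right))
  exact mem_locallyFiniteSubmodule.2 ⟨_, hinv, (fg_span_singleton v).sup hUfg,
    mem_sup_left (mem_span_singleton_self v)⟩

theorem locallyFiniteSubmodule_eq_top_of_triangular {ι : Type*} {r : ι → ι → Prop}
    (hr : WellFounded r) (b : Basis ι R M)
    (hT : ∀ i, T (b i) ∈ span R (b '' {j | r j i ∨ j = i})) :
    T.locallyFiniteSubmodule = ⊤ := by
  have hb : ∀ i, b i ∈ T.locallyFiniteSubmodule := by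
    intro i
    induction i using hr.induction with
    | _ i ih =>
      refine mem_locallyFiniteSubmodule_of_apply_mem_sup (span_le.2 ?_ (hT i))
      rintro _ ⟨j, hj | rfl, rfl⟩
      · exact mem_sup_right (ih j hj)
      · exact mem_sup_left (mem_span_singleton_self _)
  rw [eq_top_iff, ← b.span_eq, span_le]
  rintro _ ⟨i, rfl⟩
  exact hb i

theorem exists_fg_invtSubmodule_ge {W : Submodule R M} (hW : W.FG)
    (hWT : W ≤ T.locallyFiniteSubmodule) : ∃ U ∈ T.invtSubmodule, U.FG ∧ W ≤ U := by
  induction W, hW using fg_induction with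
  | singleton x =>
    obtain ⟨U, hU, hUfg, hx⟩ := (span_singleton_le_iff_mem _ _).1 hWT
    exact ⟨U, hU, hUfg, (span_singleton_le_iff_mem _ _).2 hx⟩
  | sup N₁ N₂ _ _ ih₁ ih₂ =>
    obtain ⟨U₁, hU₁, hU₁fg, hN₁⟩ := ih₁ (le_sup_left.trans hWT)
    obtain ⟨U₂, hU₂, hU₂fg, hN₂⟩ := ih₂ (le_sup_right.trans hWT)
    exact ⟨U₁ ⊔ U₂, invtSubmodule.sup_mem hU₁ hU₂, hU₁fg.sup hU₂fg, sup_le_sup hN₁ hN₂⟩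

end Module.End

/-- If `T` is triangular with respect to a well-ordered basis of `V`, then every
finite-dimensional subspace of `V` is contained in a finite-dimensional `T`-invariant
subspace of `V`. -/
theorem finiteDimensional_le_invariant_of_triangular
    {k : Type u} {V : Type v} [Field k] [AddCommGroup V] [Module k V]
    {ι : Type*} (r : ι → ι → Prop) (hwo : IsWellOrder ι r) (b : Module.Basis ι k V)
    (T : Module.End k V)
    (hT : ∀ i, T (b i) ∈ Submodule.span k (⇑b '' {j | r j i ∨ j = i})) :
    ∀ W : Submodule k V, FiniteDimensional k W →
      ∃ U : Submodule k V, FiniteDimensional k U ∧ W ≤ U ∧ ∀ v ∈ U, T v ∈ U := by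
  intro W hW
  have hWT : W ≤ T.locallyFiniteSubmodule := by
    rw [Module.End.locallyFiniteSubmodule_eq_top_of_triangular hwo.wf b hT]
    exact le_top
  obtain ⟨U, hUT, hUfg, hWU⟩ :=
    Module.End.exists_fg_invtSubmodule_ge (W.fg_iff_finiteDimensional.2 hW) hWT
  exact ⟨U, U.fg_iff_finiteDimensional.1 hUfg, hWU, fun _ hv => hUT hv⟩
end

section
/- Let k be a field, V a k-vector space, and T a linear transformation of V. If V = ⋃_{i=1}^∞ ker(T^i), then T is strictly triangularizable, i.e., there is a basis (b_i)_{i∈I} of V indexed by a well-ordered set I such that T(b_i) lies in the span of {b_j : j < i} for every i ∈ I. -/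
universe u v

/-!
The kernels `ker Tⁿ` form an increasing chain of subspaces exhausting `V`. Extending a basis of
each one to a basis of the next yields a basis of `V` adapted to the chain. Order its vectors
by their degree, the least `n` with `Tⁿ b = 0`, breaking ties by an arbitrary well-order: `T`
strictly lowers the degree, so `T b` lies in the span of the basis vectors of smaller degree.
-/

open Submodule

section AdaptedBasis

variable {k : Type u} {V : Type v} [DivisionRing k] [AddCommGroup V] [Module k V]

noncomputable def adaptedBasisSets (W : ℕ → Submodule k V) (hW : Monotone W) :
    (n : ℕ) → {s : Set V // LinearIndepOn k id s ∧ s ⊆ W n ∧ (W n : Set V) ⊆ span k s}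
  | 0 =>
    let h := linearIndepOn_empty k (id : V → V)
    ⟨h.extend (Set.empty_subset _), h.linearIndepOn_extend _, h.extend_subset _,
      h.subset_span_extend _⟩
  | n + 1 =>
    let h := (adaptedBasisSets W hW n).2.1
    let hsub := (adaptedBasisSets W hW n).2.2.1.trans (hW n.le_succ)
    ⟨h.extend hsub, h.linearIndepOn_extend _, h.extend_subset _, h.subset_span_extend _⟩

theorem monotone_adaptedBasisSets (W : ℕ → Submodule k V) (hW : Monotone W) :
    Monotone fun n => (adaptedBasisSets W hW n).1 :=
  monotone_nat_of_le_succ fun n =>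
    let p := adaptedBasisSets W hW n
    p.2.1.subset_extend (p.2.2.1.trans (hW n.le_succ))

theorem exists_basis_le_span_of_monotone {W : ℕ → Submodule k V} (hW : Monotone W)
    (hcover : ∀ v, ∃ n, v ∈ W n) :
    ∃ (ι : Type v) (b : Module.Basis ι k V),
      ∀ n, W n ≤ span k (b '' {i | b i ∈ W n}) := by
  let s n := (adaptedBasisSets W hW n).1
  have hli : LinearIndepOn k id (⋃ n, s n) :=
    linearIndepOn_iUnion_of_directed (monotone_adaptedBasisSets W hW).directed_le
      fun n => (adaptedBasisSets W hW n).2.1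
  have hspan_le (n : ℕ) : W n ≤ span k (⋃ n, s n) := fun _ hv =>
    span_mono (Set.subset_iUnion s n) ((adaptedBasisSets W hW n).2.2.2 hv)
  have hspan : ⊤ ≤ span k (Set.range ((↑) : (⋃ n, s n) → V)) := by
    rw [Subtype.range_coe]
    exact fun v _ => let ⟨n, hv⟩ := hcover v; hspan_le n hv
  refine ⟨_, Module.Basis.mk hli hspan, fun n v hv => span_mono ?_
    ((adaptedBasisSets W hW n).2.2.2 hv)⟩
  intro x hx
  exact ⟨⟨x, Set.mem_iUnion_of_mem n hx⟩, by simpa using (adaptedBasisSets W hW n).2.2.1 hx,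
    by simp⟩

end AdaptedBasis

theorem exists_isWellOrder_of_lt_comp {ι α : Type*} [LinearOrder α] [WellFoundedLT α]
    (f : ι → α) :
    ∃ r : ι → ι → Prop, IsWellOrder ι r ∧ ∀ i j, f i < f j → r i j := by
  let emb : InvImage (Prod.Lex (· < ·) WellOrderingRel) (fun i => (f i, i)) ↪r
      Prod.Lex ((· < ·) : α → α → Prop) (WellOrderingRel (α := ι)) :=
    ⟨⟨fun i => (f i, i), fun _ _ h => congrArg Prod.snd h⟩, Iff.rfl⟩
  exact ⟨_, emb.isWellOrder, fun i j h => Prod.Lex.left _ _ h⟩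

/-- If `V = ⋃_{i≥1} ker(T^i)`, then `T` is strictly triangularizable: there is a basis of `V`
indexed by a well-ordered set such that `T (b i)` lies in the span of `{b j : j < i}`. -/
theorem strictlyTriangularizable_of_locally_nilpotent
    {k : Type u} {V : Type v} [Field k] [AddCommGroup V] [Module k V]
    (T : Module.End k V) (h : ∀ v : V, ∃ i : ℕ, 1 ≤ i ∧ (T ^ i) v = 0) :
    ∃ (ι : Type v) (r : ι → ι → Prop) (b : Module.Basis ι k V),
      IsWellOrder ι r ∧ ∀ i, T (b i) ∈ Submodule.span k (⇑b '' {j | r j i}) := by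
  classical
  let W n := LinearMap.ker (T ^ n)
  have hW : Monotone W := monotone_nat_of_le_succ fun n => by
    simpa only [W, pow_succ', Module.End.mul_eq_comp] using LinearMap.ker_le_ker_comp _ T
  have hcover (v : V) : ∃ n, v ∈ W n := (h v).imp fun _ => And.right
  obtain ⟨ι, b, hb⟩ := exists_basis_le_span_of_monotone hW hcover
  let degree i := Nat.find (hcover (b i))
  have hdegree i : (T ^ degree i) (b i) = 0 := Nat.find_spec (hcover (b i))
  obtain ⟨r, hr, hlt⟩ := exists_isWellOrder_of_lt_comp degree
  refine ⟨ι, r, b, hr, fun i => ?_⟩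
  obtain ⟨m, hm⟩ : ∃ m, degree i = m + 1 := Nat.exists_eq_succ_of_ne_zero fun h0 =>
    b.ne_zero i (by simpa [h0] using hdegree i)
  have hTb : T (b i) ∈ W m := by
    simpa only [W, LinearMap.mem_ker, hm, pow_succ, Module.End.mul_apply] using hdegree i
  refine span_mono (Set.image_mono fun j hj => hlt j i ?_) (hb m hTb)
  have : degree j ≤ m := Nat.find_min' (hcover (b j)) hj
  omega
end

section
/- Let k be a field, V a k-vector space, T a triangularizable linear transformation of V, and W a T-invariant subspace of V. Then the restriction T|_W, viewed as a linear transformation of the vector space W, is triangularizable. -/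
/-! Gaussian elimination along the well-ordered basis `b`. Call `i` a pivot of `W` if some
vector of `W` lies in `span (b '' Iic i)` with `i`-th coordinate `1`, and choose such a vector
`u i` for every pivot. Distinct leading indices make the `u i` independent, and well-founded
induction on `i` (subtract the multiple of `u i` that kills the `i`-th coordinate) shows that
`W ⊓ span (b '' Iic i)` is spanned by the `u j` with `j ≤ i`. As `T` preserves every
`span (b '' Iic i)`, `T (u i)` lies in that intersection, so the `u i` triangularize `T|_W`. -/

universe u v

open Polynomial

open Submodule

namespace Module.Basis

variable {ι k V : Type*} [LinearOrder ι] [Field k] [AddCommGroup V] [Module k V]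
  (b : Basis ι k V)

def spanIic (i : ι) : Submodule k V := span k (b '' Set.Iic i)

variable {b}

theorem mem_spanIic_iff {x : V} {i : ι} : x ∈ b.spanIic i ↔ ∀ j ∈ (b.repr x).support, j ≤ i :=
  b.mem_span_image

theorem spanIic_mono : Monotone b.spanIic :=
  fun _ _ hij => span_mono (Set.image_mono (Set.Iic_subset_Iic.mpr hij))

theorem repr_eq_zero_of_mem_spanIic {x : V} {i j : ι} (hx : x ∈ b.spanIic i) (hij : i < j) :
    b.repr x j = 0 :=
  Finsupp.notMem_support_iff.mp fun hj => (mem_spanIic_iff.mp hx j hj).not_gt hij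

theorem mem_spanIic_max' {x : V} (hx : (b.repr x).support.Nonempty) :
    x ∈ b.spanIic ((b.repr x).support.max' hx) :=
  mem_spanIic_iff.mpr fun j hj => (b.repr x).support.le_max' j hj

theorem exists_lt_mem_spanIic {x : V} {i : ι} (hx : x ∈ b.spanIic i) (hxi : b.repr x i = 0)
    (hx0 : x ≠ 0) : ∃ j < i, x ∈ b.spanIic j := by
  have hne : (b.repr x).support.Nonempty := by simpa using hx0
  refine ⟨_, lt_of_le_of_ne (mem_spanIic_iff.mp hx _ (Finset.max'_mem _ hne)) ?_,
    mem_spanIic_max' hne⟩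
  intro h
  exact Finsupp.mem_support_iff.mp (h ▸ Finset.max'_mem _ hne) hxi

theorem spanIic_le_comap {T : Module.End k V} (hT : ∀ i, T (b i) ∈ b.spanIic i) (i : ι) :
    b.spanIic i ≤ (b.spanIic i).comap T :=
  span_le.mpr <| Set.image_subset_iff.mpr fun j hj => spanIic_mono hj (hT j)

theorem linearIndependent_of_mem_spanIic {s : Set ι} {v : s → V}
    (hv : ∀ j : s, v j ∈ b.spanIic j) (hvj : ∀ j, b.repr (v j) j ≠ 0) : LinearIndependent k v := by
  rw [linearIndependent_iff]
  intro l hl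
  by_contra hl0
  have hs : l.support.Nonempty := Finsupp.support_nonempty_iff.mpr hl0
  set i₀ := l.support.max' hs
  have hi₀ : i₀ ∈ l.support := Finset.max'_mem _ _
  have hcoord : b.repr (Finsupp.linearCombination k v l) i₀ = l i₀ * b.repr (v i₀) i₀ := by
    rw [Finsupp.linearCombination_apply, Finsupp.sum, map_sum, Finsupp.finsetSum_apply,
      Finset.sum_eq_single_of_mem i₀ hi₀]
    · simp
    · intro j hj hne
      have hlt : (j : ι) < i₀ := (l.support.le_max' j hj).lt_of_ne hne
      simp [repr_eq_zero_of_mem_spanIic (hv j) hlt]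
  rw [hl, map_zero, Finsupp.zero_apply, eq_comm, mul_eq_zero] at hcoord
  exact hcoord.elim (Finsupp.mem_support_iff.mp hi₀) (hvj i₀)

theorem mem_span_of_mem_spanIic [WellFoundedLT ι] {W : Submodule k V} {s : Set ι} {v : s → V}
    (hvW : ∀ j, v j ∈ W) (hv : ∀ j : s, v j ∈ b.spanIic j) (hv1 : ∀ j, b.repr (v j) j = 1)
    (hs : ∀ i, ∀ w ∈ W, w ∈ b.spanIic i → b.repr w i ≠ 0 → i ∈ s) (i : ι) :
    ∀ w ∈ W, w ∈ b.spanIic i → w ∈ span k (v '' {j | ↑j ≤ i}) := by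
  induction i using WellFoundedLT.induction with
  | _ i IH =>
  have mono : ∀ {j}, j ≤ i → span k (v '' {j' | ↑j' ≤ j}) ≤ span k (v '' {j' | ↑j' ≤ i}) :=
    fun hji => span_mono (Set.image_mono fun j' hj' => le_trans hj' hji)
  have of_repr_eq_zero : ∀ w ∈ W, w ∈ b.spanIic i → b.repr w i = 0 →
      w ∈ span k (v '' {j | ↑j ≤ i}) := by
    intro w hwW hwi hw0
    rcases eq_or_ne w 0 with rfl | hne
    · exact zero_mem _
    obtain ⟨j, hji, hwj⟩ := exists_lt_mem_spanIic hwi hw0 hne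
    exact mono hji.le (IH j hji w hwW hwj)
  intro w hwW hwi
  by_cases hw0 : b.repr w i = 0
  · exact of_repr_eq_zero w hwW hwi hw0
  set c := b.repr w i
  let i' : s := ⟨i, hs i w hwW hwi hw0⟩
  have hsub := of_repr_eq_zero (w - c • v i') (W.sub_mem hwW (W.smul_mem c (hvW i')))
    (sub_mem hwi (smul_mem _ c (hv i'))) (by simp [c, show b.repr (v i') i = 1 from hv1 i'])
  have hvi : v i' ∈ span k (v '' {j | ↑j ≤ i}) := subset_span ⟨i', le_rfl, rfl⟩
  simpa using add_mem hsub (smul_mem _ c hvi)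

variable (b) in
def pivots (W : Submodule k V) : Set ι := {i | ∃ w ∈ W, w ∈ b.spanIic i ∧ b.repr w i = 1}

theorem mem_pivots {W : Submodule k V} {i : ι} {w : V} (hwW : w ∈ W) (hwi : w ∈ b.spanIic i)
    (hw0 : b.repr w i ≠ 0) : i ∈ b.pivots W :=
  ⟨(b.repr w i)⁻¹ • w, W.smul_mem _ hwW, smul_mem _ _ hwi, by simp [hw0]⟩

variable (b) in
noncomputable def pivotVector (W : Submodule k V) (i : b.pivots W) : V := i.2.choose

section pivotVector

variable {W : Submodule k V} (i : b.pivots W)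

theorem pivotVector_mem : b.pivotVector W i ∈ W := i.2.choose_spec.1

theorem pivotVector_mem_spanIic : b.pivotVector W i ∈ b.spanIic i := i.2.choose_spec.2.1

theorem repr_pivotVector_self : b.repr (b.pivotVector W i) i = 1 := i.2.choose_spec.2.2

end pivotVector

theorem mem_span_pivotVector [WellFoundedLT ι] {W : Submodule k V} {i : ι} {w : V}
    (hwW : w ∈ W) (hwi : w ∈ b.spanIic i) :
    w ∈ span k (b.pivotVector W '' {j | ↑j ≤ i}) :=
  mem_span_of_mem_spanIic pivotVector_mem pivotVector_mem_spanIic repr_pivotVector_self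
    (fun _ _ => mem_pivots) i w hwW hwi

variable (b) in
noncomputable def echelonBasis [WellFoundedLT ι] (W : Submodule k V) : Basis (b.pivots W) k W :=
  .mk (v := fun i => ⟨b.pivotVector W i, pivotVector_mem i⟩)
    (.of_comp W.subtype <| linearIndependent_of_mem_spanIic pivotVector_mem_spanIic
      fun i => by simp [repr_pivotVector_self i])
    (by
      rintro ⟨x, hx⟩ -
      rw [← apply_mem_span_image_iff_mem_span W.injective_subtype, ← Set.range_comp]
      rcases eq_or_ne x 0 with rfl | hx0
      · exact zero_mem _
      have hne : (b.repr x).support.Nonempty := by simpa using hx0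
      exact span_mono (Set.image_subset_range _ _) (mem_span_pivotVector hx (mem_spanIic_max' hne)))

@[simp]
theorem coe_echelonBasis_apply [WellFoundedLT ι] {W : Submodule k V} (i : b.pivots W) :
    (b.echelonBasis W i : V) = b.pivotVector W i := by
  simp [echelonBasis]

theorem restrict_echelonBasis_mem_spanIic [WellFoundedLT ι] {T : Module.End k V}
    (hT : ∀ i, T (b i) ∈ b.spanIic i) {W : Submodule k V} (hW : ∀ v ∈ W, T v ∈ W)
    (i : b.pivots W) : T.restrict hW (b.echelonBasis W i) ∈ (b.echelonBasis W).spanIic i := by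
  have hTi : T (b.pivotVector W i) ∈ b.spanIic i :=
    spanIic_le_comap hT i (pivotVector_mem_spanIic i)
  rw [spanIic, ← apply_mem_span_image_iff_mem_span W.injective_subtype, ← Set.image_comp]
  simp only [Function.comp_def, subtype_apply, LinearMap.coe_restrict_apply,
    coe_echelonBasis_apply]
  exact mem_span_pivotVector (hW _ (pivotVector_mem i)) hTi

end Module.Basis

theorem triangularizable_iff {k : Type u} {V : Type v} [Field k] [AddCommGroup V] [Module k V]
    (T : Module.End k V) :
    Triangularizable T ↔ ∃ (ι : Type v) (_ : LinearOrder ι) (_ : WellFoundedLT ι)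
      (b : Module.Basis ι k V), ∀ i, T (b i) ∈ b.spanIic i := by
  constructor
  · rintro ⟨ι, r, b, hr, hb⟩
    let := IsWellOrder.linearOrder r
    refine ⟨ι, inferInstance, ⟨hr.wf⟩, b, fun i => ?_⟩
    have hIic : Set.Iic i = {j | r j i ∨ j = i} := Set.ext fun j => Or.comm
    rw [Module.Basis.spanIic, hIic]
    exact hb i
  · rintro ⟨ι, _, _, b, hb⟩
    refine ⟨ι, (· < ·), b, isWellOrder_lt, fun i => ?_⟩
    simpa [Module.Basis.spanIic, Set.Iic, le_iff_lt_or_eq] using hb i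

/-- The restriction of a triangularizable transformation to an invariant subspace is
triangularizable. -/
theorem triangularizable_restrict
    {k : Type u} {V : Type v} [Field k] [AddCommGroup V] [Module k V]
    (T : Module.End k V) (hT : Triangularizable T)
    (W : Submodule k V) (hW : ∀ v ∈ W, T v ∈ W) :
    Triangularizable (T.restrict hW) := by
  obtain ⟨ι, _, _, b, hb⟩ := (triangularizable_iff T).mp hT
  exact (triangularizable_iff _).mpr ⟨b.pivots W, inferInstance, inferInstance,
    b.echelonBasis W, b.restrict_echelonBasis_mem_spanIic hb hW⟩
end

section
/- Let k be a field, V a k-vector space, T a triangularizable linear transformation of V, and W a T-invariant subspace of V. Then the induced linear transformation T̄ of the quotient space V/W, defined by T̄(v + W) = T(v) + W, is triangularizable. -/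
/-!
Push a triangularizing well-ordered basis `b` of `V` down to `V ⧸ W`. The images `c i` still span
and `T̄ (c i)` lies in the span of `{c j : j ≤ i}`, but they may be dependent. Keeping only the
indices `i` with `c i` outside the span of its predecessors gives a well-ordered subfamily which is
linearly independent (look at the largest index of a dependence relation) and spans the same flag
`span {c j : j ≤ i}`, so it is a triangularizing basis of `V ⧸ W`.
-/

universe u v

open Set Submodule

section Pivots

variable {K V ι : Type*} [DivisionRing K] [AddCommGroup V] [Module K V] [LinearOrder ι]

theorem linearIndepOn_of_notMem_span_Iio {v : ι → V} {s : Set ι}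
    (h : ∀ i ∈ s, v i ∉ span K (v '' (s ∩ Iio i))) : LinearIndepOn K v s := by
  classical
  refine linearIndepOn_of_finite s fun t hts ht => ?_
  obtain ⟨t, rfl⟩ := ht.exists_finset_coe
  clear ht
  induction t using Finset.induction_on_max with
  | empty => simp
  | insert a t hlt ih =>
    rw [Finset.coe_insert] at hts ⊢
    have hts' : (t : Set ι) ⊆ s := (subset_insert _ _).trans hts
    refine (ih hts').insert fun hspan => h a (hts (mem_insert _ _)) (span_mono ?_ hspan)
    exact image_mono fun x hx => ⟨hts' hx, hlt x hx⟩

variable (K) in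
/-- The indices at which the flag `span K (v '' Iic i)` strictly grows. -/
def pivotIndices (v : ι → V) : Set ι :=
  {i | v i ∉ span K (v '' Iio i)}

theorem linearIndepOn_pivotIndices (v : ι → V) : LinearIndepOn K v (pivotIndices K v) :=
  linearIndepOn_of_notMem_span_Iio fun _ hi hspan =>
    hi (span_mono (image_mono inter_subset_right) hspan)

theorem span_image_pivotIndices_inter_Iic [WellFoundedLT ι] (v : ι → V) (i : ι) :
    span K (v '' (pivotIndices K v ∩ Iic i)) = span K (v '' Iic i) := by
  refine le_antisymm (span_mono (image_mono inter_subset_right)) (span_le.2 ?_)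
  rintro _ ⟨j, hji, rfl⟩
  induction j using WellFoundedLT.induction with
  | ind j ih =>
    by_cases hj : j ∈ pivotIndices K v
    · exact subset_span ⟨j, ⟨hj, hji⟩, rfl⟩
    · refine span_le.2 ?_ (not_not.1 hj)
      rintro _ ⟨l, hlj, rfl⟩
      exact ih l hlj (hlj.le.trans hji)

noncomputable def Module.Basis.ofPivotIndices [WellFoundedLT ι] {v : ι → V}
    (hv : span K (range v) = ⊤) : Module.Basis (pivotIndices K v) K V :=
  .mk (linearIndepOn_pivotIndices v) <| by
    rw [← hv, span_le]
    rintro _ ⟨i, rfl⟩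
    refine span_mono ?_
      ((span_image_pivotIndices_inter_Iic v i).ge (subset_span ⟨i, le_rfl, rfl⟩))
    rintro _ ⟨j, ⟨hj, -⟩, rfl⟩
    exact ⟨⟨j, hj⟩, rfl⟩

@[simp]
theorem Module.Basis.coe_ofPivotIndices [WellFoundedLT ι] {v : ι → V}
    (hv : span K (range v) = ⊤) :
    ⇑(Module.Basis.ofPivotIndices hv) = fun i : pivotIndices K v => v i :=
  Module.Basis.coe_mk _ _

theorem Module.Basis.span_image_ofPivotIndices_Iic [WellFoundedLT ι] {v : ι → V}
    (hv : span K (range v) = ⊤) (i : pivotIndices K v) :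
    span K (Module.Basis.ofPivotIndices hv '' Iic i) = span K (v '' Iic (i : ι)) := by
  rw [← span_image_pivotIndices_inter_Iic v, Module.Basis.coe_ofPivotIndices]
  congr 1
  ext x
  constructor
  · rintro ⟨j, hji, rfl⟩
    exact ⟨j, ⟨j.2, hji⟩, rfl⟩
  · rintro ⟨j, ⟨hj, hji⟩, rfl⟩
    exact ⟨⟨j, hj⟩, hji, rfl⟩

end Pivots

section Triangularizable

variable {k : Type u} {V : Type v} [Field k] [AddCommGroup V] [Module k V] {T : Module.End k V}

theorem Triangularizable.exists_basis (hT : Triangularizable T) :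
    ∃ (ι : Type v) (_ : LinearOrder ι) (_ : WellFoundedLT ι) (b : Module.Basis ι k V),
      ∀ i, T (b i) ∈ span k (b '' Iic i) := by
  obtain ⟨ι, r, b, hr, hb⟩ := hT
  let _ := IsWellOrder.linearOrder r
  refine ⟨ι, inferInstance, ⟨hr.wf⟩, b, fun i => ?_⟩
  have hIic : Iic i = {j | r j i ∨ j = i} := ext fun j => show j ≤ i ↔ _ from le_iff_lt_or_eq
  rw [hIic]
  exact hb i

theorem triangularizable_of_basis {ι : Type v} [LinearOrder ι] [WellFoundedLT ι]
    (b : Module.Basis ι k V) (hb : ∀ i, T (b i) ∈ span k (b '' Iic i)) : Triangularizable T :=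
  ⟨ι, (· < ·), b, inferInstance, fun i => by simpa only [Iic, le_iff_lt_or_eq] using hb i⟩

theorem triangularizable_of_span_eq_top {ι : Type v} [LinearOrder ι] [WellFoundedLT ι]
    {v : ι → V} (hv : span k (range v) = ⊤) (hT : ∀ i, T (v i) ∈ span k (v '' Iic i)) :
    Triangularizable T :=
  triangularizable_of_basis (Module.Basis.ofPivotIndices hv) fun i => by
    rw [Module.Basis.span_image_ofPivotIndices_Iic, Module.Basis.coe_ofPivotIndices]
    exact hT i

end Triangularizable

/-- The transformation induced on the quotient by an invariant subspace of a triangularizable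
transformation is triangularizable. -/
theorem triangularizable_mapQ
    {k : Type u} {V : Type v} [Field k] [AddCommGroup V] [Module k V]
    (T : Module.End k V) (hT : Triangularizable T)
    (W : Submodule k V) (hW : W ≤ W.comap T) :
    Triangularizable (W.mapQ W T hW) := by
  obtain ⟨ι, _, _, b, hb⟩ := hT.exists_basis
  refine triangularizable_of_span_eq_top (v := W.mkQ ∘ b) ?_ fun i => ?_
  · rw [range_comp, ← map_span, b.span_eq, Submodule.map_top, range_mkQ]
  · rw [image_comp, ← map_span]
    exact ⟨T (b i), hb i, rfl⟩
end

section
/- Let k be a field, V a nonzero k-vector space, and T a triangularizable linear transformation of V. Then there exists a ∈ k such that W = ker(T − aI) is nonzero (where I is the identity transformation); moreover, for any a ∈ k, the subspace ker(T − aI) is invariant under every linear transformation S of V that commutes with T (i.e., S(ker(T − aI)) ⊆ ker(T − aI) whenever ST = TS). -/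
universe u v

open Polynomial

/-!
The first basis vector of a triangularizing basis spans a `T`-stable line, so it is an
eigenvector. The eigenspaces of `T` are kernels of polynomials in `T`, hence stable under
everything commuting with `T`.
-/

open Module End

theorem Module.End.exists_hasEigenvector_of_apply_mem_span_singleton {R M : Type*} [CommRing R]
    [AddCommGroup M] [Module R M] {f : End R M} {x : M} (hx : x ≠ 0) (hfx : f x ∈ R ∙ x) :
    ∃ μ : R, f.HasEigenvector μ x := by
  obtain ⟨μ, hμ⟩ := Submodule.mem_span_singleton.mp hfx
  exact ⟨μ, mem_eigenspace_iff.mpr hμ.symm, hx⟩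

theorem Triangularizable.exists_hasEigenvalue {k : Type u} {V : Type v} [Field k]
    [AddCommGroup V] [Module k V] [Nontrivial V] {T : End k V} (hT : Triangularizable T) :
    ∃ a : k, T.HasEigenvalue a := by
  obtain ⟨ι, r, b, hwo, htri⟩ := hT
  have := b.index_nonempty
  obtain ⟨i₀, -, hmin⟩ := hwo.wf.has_min Set.univ Set.univ_nonempty
  have hlower : {j | r j i₀ ∨ j = i₀} = {i₀} := by
    ext j
    simp [hmin j trivial]
  have hspan := htri i₀
  rw [hlower, Set.image_singleton] at hspan
  obtain ⟨a, ha⟩ := exists_hasEigenvector_of_apply_mem_span_singleton (b.ne_zero i₀) hspan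
  exact ⟨a, hasEigenvalue_of_hasEigenvector ha⟩

/-- If `V ≠ 0` and `T` is triangularizable, then some eigenspace `ker(T - aI)` is nonzero;
moreover every eigenspace of `T` is invariant under any transformation commuting with `T`. -/
theorem exists_nonzero_eigenspace_and_centralizer_invariant
    {k : Type u} {V : Type v} [Field k] [AddCommGroup V] [Module k V] [Nontrivial V]
    (T : Module.End k V) (hT : Triangularizable T) :
    (∃ a : k, LinearMap.ker (T - a • (1 : Module.End k V)) ≠ ⊥) ∧
      ∀ (a : k) (S : Module.End k V), S * T = T * S →
        ∀ v ∈ LinearMap.ker (T - a • (1 : Module.End k V)),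
          S v ∈ LinearMap.ker (T - a • (1 : Module.End k V)) := by
  simp only [← eigenspace_def]
  exact ⟨hT.exists_hasEigenvalue, fun a S hST =>
    mapsTo_genEigenspace_of_comm (show Commute T S from hST.symm) a 1⟩
end

section
/- Let k be a field, V a nonzero k-vector space, and X a finite set of pairwise commuting linear transformations of V, each of which is triangularizable. Then there exists a one-dimensional subspace W of V such that S(W) ⊆ W for every S ∈ X. -/
universe u v

open Polynomial

/-!
Let `T` be triangular with respect to a basis `b` indexed by a well-order, and `W ≠ 0` a
`T`-invariant subspace. Take the least index `i` such that `W` meets `U i = span {b j | j ≤ i}`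
nontrivially. A vector of `W ∩ U i` is then determined up to scalars by its `i`-th coordinate,
and `U i` is `T`-invariant, so a nonzero `v ∈ W ∩ U i` is an eigenvector of `T`: subtracting
the right multiple of `v` from `T v` kills the `i`-th coordinate. For a finite commuting family,
eigenspaces of one member are invariant under the others, so one restricts to
`W ∩ eigenspace` and inducts on the family.
-/

namespace Module.Basis

open Submodule

variable {k V ι : Type*} [Field k] [AddCommGroup V] [Module k V] [LinearOrder ι]
  (b : Basis ι k V)

theorem mem_span_image_Iic_max' {v : V} (hs : (b.repr v).support.Nonempty) :
    v ∈ span k (b '' Set.Iic ((b.repr v).support.max' hs)) :=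
  b.mem_span_image.2 fun _ hj => Finset.le_max' _ _ hj

theorem exists_lt_mem_span_image_Iic {v : V} {i : ι} (hv : v ∈ span k (b '' Set.Iic i))
    (hvi : b.repr v i = 0) (hv0 : v ≠ 0) : ∃ j < i, v ∈ span k (b '' Set.Iic j) := by
  have hs : (b.repr v).support.Nonempty := by simpa using hv0
  have hmem := (b.repr v).support.max'_mem hs
  refine ⟨_, lt_of_le_of_ne (b.mem_span_image.1 hv hmem) fun h => ?_,
    b.mem_span_image_Iic_max' hs⟩
  rw [h, Finsupp.mem_support_iff] at hmem
  exact hmem hvi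

theorem mem_span_image_Iic_of_triangular {T : Module.End k V}
    (hT : ∀ i, T (b i) ∈ span k (b '' Set.Iic i)) {i : ι} {v : V}
    (hv : v ∈ span k (b '' Set.Iic i)) : T v ∈ span k (b '' Set.Iic i) := by
  refine (span_le (p := (span k (b '' Set.Iic i)).comap T)).2 ?_ hv
  rintro _ ⟨j, hj, rfl⟩
  exact span_mono (Set.image_mono (Set.Iic_subset_Iic.2 hj)) (hT j)

theorem exists_inf_eigenspace_ne_bot_of_triangular [WellFoundedLT ι] {T : Module.End k V}
    (hT : ∀ i, T (b i) ∈ span k (b '' Set.Iic i)) {W : Submodule k V} (hW : W ≠ ⊥)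
    (hWT : ∀ v ∈ W, T v ∈ W) : ∃ c, W ⊓ T.eigenspace c ≠ ⊥ := by
  set U : ι → Submodule k V := fun i => span k (b '' Set.Iic i)
  have hne : ∃ i, W ⊓ U i ≠ ⊥ := by
    obtain ⟨w, hwW, hw0⟩ := W.exists_mem_ne_zero_of_ne_bot hW
    exact ⟨_, (Submodule.ne_bot_iff _).2
      ⟨w, ⟨hwW, b.mem_span_image_Iic_max' (by simpa using hw0)⟩, hw0⟩⟩
  obtain ⟨i, hi, hmin⟩ := wellFounded_lt.has_min {i | W ⊓ U i ≠ ⊥} hne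
  have hlead : ∀ u ∈ W ⊓ U i, b.repr u i = 0 → u = 0 := by
    rintro u ⟨huW, huU⟩ hui
    by_contra hu0
    obtain ⟨j, hji, hj⟩ := b.exists_lt_mem_span_image_Iic huU hui hu0
    exact hmin j ((Submodule.ne_bot_iff _).2 ⟨u, ⟨huW, hj⟩, hu0⟩) hji
  obtain ⟨v, hv, hv0⟩ := (Submodule.ne_bot_iff _).1 hi
  have hvi : b.repr v i ≠ 0 := fun h => hv0 (hlead v hv h)
  set c := b.repr (T v) i / b.repr v i
  refine ⟨c, (Submodule.ne_bot_iff _).2 ⟨v, Submodule.mem_inf.2 ⟨hv.1, ?_⟩, hv0⟩⟩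
  rw [Module.End.mem_eigenspace_iff, ← sub_eq_zero]
  refine hlead _ ⟨W.sub_mem (hWT v hv.1) (W.smul_mem c hv.1),
    (U i).sub_mem (b.mem_span_image_Iic_of_triangular hT hv.2) ((U i).smul_mem c hv.2)⟩ ?_
  simp [c, hvi]

end Module.Basis

section

variable {k : Type u} {V : Type v} [Field k] [AddCommGroup V] [Module k V]

theorem Triangularizable.exists_inf_eigenspace_ne_bot {T : Module.End k V}
    (hT : Triangularizable T) {W : Submodule k V} (hW : W ≠ ⊥) (hWT : ∀ v ∈ W, T v ∈ W) :
    ∃ c, W ⊓ T.eigenspace c ≠ ⊥ := by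
  obtain ⟨ι, r, b, hr, hb⟩ := hT
  let := IsWellOrder.linearOrder r
  have : WellFoundedLT ι := ⟨hr.wf⟩
  refine b.exists_inf_eigenspace_ne_bot_of_triangular (fun i => ?_) hW hWT
  convert hb i using 4
  exact Set.ext fun _ => or_comm

theorem exists_common_eigenvector_of_commute {X : Set (Module.End k V)} (hX : X.Finite)
    (hcomm : ∀ S ∈ X, ∀ T ∈ X, S * T = T * S) (htri : ∀ S ∈ X, Triangularizable S)
    {W : Submodule k V} (hW : W ≠ ⊥) (hWX : ∀ S ∈ X, ∀ v ∈ W, S v ∈ W) :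
    ∃ v ∈ W, v ≠ 0 ∧ ∀ S ∈ X, ∃ c : k, S v = c • v := by
  induction X, hX using Set.Finite.induction_on generalizing W with
  | empty =>
    obtain ⟨v, hv, hv0⟩ := W.exists_mem_ne_zero_of_ne_bot hW
    exact ⟨v, hv, hv0, by simp⟩
  | @insert T X _ _ ih =>
    obtain ⟨c, hc⟩ := (htri T (Set.mem_insert _ _)).exists_inf_eigenspace_ne_bot hW
      (hWX T (Set.mem_insert _ _))
    have hinv : ∀ S ∈ X, ∀ v ∈ W ⊓ T.eigenspace c, S v ∈ W ⊓ T.eigenspace c :=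
      fun S hS v hv => ⟨hWX S (Set.mem_insert_of_mem _ hS) v hv.1,
        Module.End.mapsTo_genEigenspace_of_comm
          (hcomm T (Set.mem_insert _ _) S (Set.mem_insert_of_mem _ hS)) c 1 hv.2⟩
    obtain ⟨v, hv, hv0, hXv⟩ := ih
      (fun S hS S' hS' => hcomm S (Set.mem_insert_of_mem _ hS) S' (Set.mem_insert_of_mem _ hS'))
      (fun S hS => htri S (Set.mem_insert_of_mem _ hS)) hc hinv
    refine ⟨v, hv.1, hv0, ?_⟩
    rintro S (rfl | hS)
    · exact ⟨c, Module.End.mem_eigenspace_iff.1 hv.2⟩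
    · exact hXv S hS

end

/-- If `V ≠ 0` and `X` is a finite set of pairwise commuting triangularizable transformations
of `V`, then some one-dimensional subspace of `V` is invariant under every element of `X`. -/
theorem exists_one_dimensional_invariant_subspace
    {k : Type u} {V : Type v} [Field k] [AddCommGroup V] [Module k V] [Nontrivial V]
    (X : Set (Module.End k V)) (hfin : X.Finite)
    (hcomm : ∀ S ∈ X, ∀ T ∈ X, S * T = T * S)
    (htri : ∀ S ∈ X, Triangularizable S) :
    ∃ W : Submodule k V, Module.finrank k W = 1 ∧ ∀ S ∈ X, ∀ v ∈ W, S v ∈ W := by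
  obtain ⟨v, -, hv0, hXv⟩ := exists_common_eigenvector_of_commute hfin hcomm htri
    (W := ⊤) top_ne_bot fun _ _ _ _ => Submodule.mem_top
  refine ⟨k ∙ v, finrank_span_singleton hv0, fun S hS w hw => ?_⟩
  obtain ⟨c, hc⟩ := hXv S hS
  obtain ⟨a, rfl⟩ := Submodule.mem_span_singleton.1 hw
  rw [map_smul, hc]
  exact Submodule.smul_mem _ a (Submodule.smul_mem _ c (Submodule.mem_span_singleton_self v))
end

section
/- Let k be a field, V a nonzero k-vector space, and T a linear transformation of V; give End_k(V) the function topology. Then the following are equivalent: (1) T is topologically nilpotent, i.e., the sequence (T^i)_{i=1}^∞ converges to 0 in the function topology; (2) V = ⋃_{i=1}^∞ ker(T^i); (3) T is strictly triangularizable; (4) T is triangularizable and, for a ∈ k, ker(T − aI) ≠ 0 if and only if a = 0. -/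
universe u v

open Polynomial

/-- `T` is strictly triangularizable: strictly triangular with respect to some basis indexed
by a well-ordered set. -/
def StrictlyTriangularizable {k : Type u} {V : Type v} [Field k] [AddCommGroup V] [Module k V]
    (T : Module.End k V) : Prop :=
  ∃ (ι : Type v) (r : ι → ι → Prop) (b : Module.Basis ι k V),
    IsWellOrder ι r ∧ ∀ i, T (b i) ∈ Submodule.span k (⇑b '' {j | r j i})

/-- The function (finite) topology on `End_k(V)`: the topology induced from the product
topology on `V → V`, where `V` carries the discrete topology. -/
def endFunctionTopology (k : Type u) (V : Type v) [Field k] [AddCommGroup V] [Module k V] :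
    TopologicalSpace (Module.End k V) :=
  TopologicalSpace.induced (fun f => (f : V → V))
    (@Pi.topologicalSpace V (fun _ => V) (fun _ => ⊥))

/-!
Convergence of `T ^ i` to `0` in the function topology says that every vector is killed by
some power of `T`, i.e. that the generalized `0`-eigenspace of `T` is all of `V`.

If `T` is strictly triangular with respect to a well-founded basis, each basis vector lies in
that eigenspace by well-founded induction. Conversely, order `V` by the height
`v ↦ min {n | T ^ n v = 0}`, breaking ties by an arbitrary well-order: `T` strictly lowers every
nonzero vector, and the greedy basis of the vectors outside the span of their predecessors is
then strictly triangular for `T`.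

For `T` triangular with respect to a well-founded basis, every diagonal entry `c i` is an
eigenvalue: at the first index `j` with `c j = c i`, the map `T - c j` is onto the span `M` of the
earlier basis vectors, so `(T - c j) (b j) = (T - c j) x` for some `x ∈ M`, and `b j - x` is an
eigenvector. Hence a triangular `T` whose only eigenvalue is `0` is strictly triangular.
-/

open Filter Module Module.End Submodule

theorem tendsto_endFunctionTopology_iff {k : Type u} {V : Type v} [Field k] [AddCommGroup V]
    [Module k V] {α : Type*} {l : Filter α} {f : α → End k V} {g : End k V} :
    Tendsto f l (@nhds _ (endFunctionTopology k V) g) ↔ ∀ v, ∀ᶠ i in l, f i v = g v := by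
  let _ : TopologicalSpace V := ⊥
  have _ : DiscreteTopology V := ⟨rfl⟩
  rw [endFunctionTopology, nhds_induced, tendsto_comap_iff, tendsto_pi_nhds]
  simp only [nhds_discrete, tendsto_pure, Function.comp_apply]

namespace Module.End

section Semiring

variable {R M : Type*} [Semiring R] [AddCommMonoid M] [Module R M] (T : End R M)

theorem eventually_pow_apply_eq_zero_iff (v : M) :
    (∀ᶠ i in atTop, (T ^ i) v = 0) ↔ ∃ i, (T ^ i) v = 0 := by
  refine ⟨Eventually.exists, fun ⟨i, hi⟩ => eventually_atTop.2 ⟨i, fun j hj => ?_⟩⟩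
  rw [← Nat.sub_add_cancel hj, pow_add, mul_apply, hi, map_zero]

theorem exists_pos_pow_apply_eq_zero_iff (v : M) :
    (∃ i, 1 ≤ i ∧ (T ^ i) v = 0) ↔ ∃ i, (T ^ i) v = 0 :=
  ⟨fun ⟨i, _, hi⟩ => ⟨i, hi⟩, fun ⟨i, hi⟩ => ⟨i + 1, Nat.le_add_left 1 i, by
    rw [pow_succ', mul_apply, hi, map_zero]⟩⟩

end Semiring

variable {R M : Type*} [CommRing R] [AddCommGroup M] [Module R M] (T : End R M)

theorem mem_maxGenEigenspace_zero (v : M) :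
    v ∈ T.maxGenEigenspace 0 ↔ ∃ i, (T ^ i) v = 0 := by
  simp

theorem maxGenEigenspace_zero_eq_top_iff :
    T.maxGenEigenspace 0 = ⊤ ↔ ∀ v, ∃ i, (T ^ i) v = 0 := by
  simp only [eq_top_iff', mem_maxGenEigenspace_zero]

variable {T} in
theorem hasEigenvalue_iff_eq_zero_of_maxGenEigenspace_zero_eq_top [IsDomain R]
    [IsTorsionFree R M] [Nontrivial M] (hT : T.maxGenEigenspace 0 = ⊤) (a : R) :
    T.HasEigenvalue a ↔ a = 0 := by
  refine ⟨fun ha => by_contra fun ha0 => ha ?_, ?_⟩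
  · have := T.disjoint_genEigenspace ha0 1 ⊤
    rwa [← maxGenEigenspace, hT, disjoint_top] at this
  · rintro rfl
    rw [hasEigenvalue_iff, eigenspace_zero, Ne, LinearMap.ker_eq_bot]
    intro hinj
    obtain ⟨v, hv⟩ := exists_ne (0 : M)
    obtain ⟨n, hn⟩ := T.maxGenEigenspace_zero_eq_top_iff.1 hT v
    rw [coe_pow] at hn
    exact hv (hinj.iterate n (by rwa [iterate_map_zero]))

end Module.End

namespace Module.Basis

variable {ι R M : Type*} {r : ι → ι → Prop}

theorem maxGenEigenspace_zero_eq_top_of_strictlyTriangular [CommRing R] [AddCommGroup M]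
    [Module R M] [IsWellFounded ι r] (b : Basis ι R M) {T : End R M}
    (hT : ∀ i, T (b i) ∈ span R (b '' {j | r j i})) : T.maxGenEigenspace 0 = ⊤ := by
  rw [eq_top_iff, ← b.span_eq, span_le]
  rintro _ ⟨i, rfl⟩
  induction i using IsWellFounded.induction r with
  | ind i ih =>
    have hTi : T (b i) ∈ T.maxGenEigenspace 0 :=
      span_le.2 (by rintro _ ⟨j, hj, rfl⟩; exact ih j hj) (hT i)
    obtain ⟨n, hn⟩ := (T.mem_maxGenEigenspace_zero _).1 hTi
    exact (T.mem_maxGenEigenspace_zero _).2 ⟨n + 1, by rw [pow_succ, mul_apply, hn]⟩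

theorem exists_diagonal_of_triangular [Ring R] [AddCommGroup M] [Module R M]
    (b : Basis ι R M) {T : M →ₗ[R] M} (hT : ∀ i, T (b i) ∈ span R (b '' {j | r j i ∨ j = i})) :
    ∃ c : ι → R, ∀ i, T (b i) - c i • b i ∈ span R (b '' {j | r j i}) := by
  have hins (i : ι) : {j | r j i ∨ j = i} = insert i {j | r j i} := by ext; simp [or_comm]
  choose c hc using fun i => mem_span_insert.1 <| by simpa [hins, Set.image_insert_eq] using hT i
  exact ⟨c, fun i => by obtain ⟨z, hz, he⟩ := hc i; rwa [he, add_sub_cancel_left]⟩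

variable {k V : Type*} [Field k] [AddCommGroup V] [Module k V] [IsWellFounded ι r] [IsTrans ι r]
  (b : Basis ι k V) {T : End k V} {c : ι → k}
  (hc : ∀ i, T (b i) - c i • b i ∈ span k (b '' {j | r j i}))
include hc

theorem span_image_le_map_sub_smul {a : k} {i : ι} (ha : ∀ j, r j i → c j ≠ a) :
    span k (b '' {j | r j i}) ≤ (span k (b '' {j | r j i})).map (T - a • 1) := by
  set M := span k (b '' {j | r j i})
  rw [span_le]
  rintro _ ⟨j, hji, rfl⟩
  induction j using IsWellFounded.induction r with
  | ind j ih =>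
    have hlower : T (b j) - c j • b j ∈ M.map (T - a • 1) :=
      span_le.2 (by rintro _ ⟨m, hmj, rfl⟩; exact ih m hmj (_root_.trans hmj hji)) (hc j)
    have hdiag : (T - a • 1) (b j) ∈ M.map (T - a • 1) :=
      mem_map_of_mem (subset_span ⟨j, hji, rfl⟩)
    have hbj : b j = (c j - a)⁻¹ • ((T - a • 1) (b j) - (T (b j) - c j • b j)) := by
      rw [LinearMap.sub_apply, LinearMap.smul_apply, one_apply, sub_sub_sub_cancel_left,
        ← sub_smul, inv_smul_smul₀ (sub_ne_zero.2 (ha j hji))]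
    rw [hbj]
    exact smul_mem _ _ (sub_mem hdiag hlower)

theorem hasEigenvalue_diagonal (i : ι) : T.HasEigenvalue (c i) := by
  obtain ⟨j, hj, hmin⟩ := (IsWellFounded.wf (r := r)).has_min {j | c j = c i} ⟨i, rfl⟩
  rw [← show c j = c i from hj]
  have ha : ∀ m, r m j → c m ≠ c j := fun m hm hcm => hmin m (hcm.trans hj) hm
  obtain ⟨x, hx, hSx⟩ := b.span_image_le_map_sub_smul hc ha (hc j)
  refine hasEigenvalue_of_hasEigenvector (x := b j - x) ⟨?_, ?_⟩
  · rw [← eigenspace, eigenspace_def, LinearMap.mem_ker, map_sub, hSx]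
    simp
  · rw [sub_ne_zero]
    rintro rfl
    exact (IsWellFounded.wf (r := r)).irrefl.irrefl j <|
      (b.self_mem_span_image (s := {m | r m j})).1 hx

end Module.Basis

section Greedy

variable (K : Type*) {V : Type*} (r : V → V → Prop)

def greedyBasisSet [Semiring K] [AddCommMonoid V] [Module K V] : Set V :=
  {v | v ∉ span K {w | r w v}}

theorem mem_span_greedyBasisSet_inter [Semiring K] [AddCommMonoid V] [Module K V]
    [IsWellFounded V r] [IsTrans V r] (v : V) :
    v ∈ span K (greedyBasisSet K r ∩ {w | r w v ∨ w = v}) := by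
  induction v using IsWellFounded.induction r with
  | ind v ih =>
    by_cases hv : v ∈ greedyBasisSet K r
    · exact subset_span ⟨hv, Or.inr rfl⟩
    · refine span_le.2 (fun w hw => ?_) (not_not.1 hv)
      refine span_mono ?_ (ih w hw)
      rintro u ⟨huG, hu | rfl⟩
      exacts [⟨huG, Or.inl (_root_.trans hu hw)⟩, ⟨huG, Or.inl hw⟩]

theorem linearIndepOn_greedyBasisSet [DivisionRing K] [AddCommGroup V] [Module K V]
    [IsWellOrder V r] : LinearIndepOn K id (greedyBasisSet K r) := by
  -- the `r`-greatest vector of the support would lie in the span of its predecessors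
  let _ := IsWellOrder.linearOrder r
  classical
  rw [linearIndepOn_iff]
  intro l hl hl0
  by_contra hne
  have hsupp : l.support.Nonempty := Finsupp.support_nonempty_iff.2 hne
  have hmax := l.support.max'_mem hsupp
  apply hl hmax
  rw [Finsupp.linearCombination_apply, Finsupp.sum, ← Finset.add_sum_erase _ _ hmax, id,
    add_eq_zero_iff_eq_neg] at hl0
  refine (smul_mem_iff _ (Finsupp.mem_support_iff.1 hmax)).1 <|
    hl0 ▸ neg_mem (sum_mem fun w hw => smul_mem _ _ (subset_span ?_))
  exact l.support.lt_max'_of_mem_erase_max' hsupp hw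

end Greedy

section Triangularizable

variable {k : Type u} {V : Type v} [Field k] [AddCommGroup V] [Module k V] {T : End k V}

theorem strictlyTriangularizable_of_isWellOrder (r : V → V → Prop) [IsWellOrder V r]
    (hT : ∀ v ≠ 0, r (T v) v) : StrictlyTriangularizable T := by
  let b := Basis.mk (linearIndepOn_greedyBasisSet k r) fun v _ => by
    simpa using span_mono Set.inter_subset_left (mem_span_greedyBasisSet_inter k r v)
  refine ⟨greedyBasisSet k r, Subrel r (· ∈ greedyBasisSet k r), b, inferInstance, fun s => ?_⟩
  have hb (s) : b s = s := Basis.mk_apply ..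
  have hs : (s : V) ≠ 0 := fun h => s.2 (h ▸ zero_mem _)
  rw [hb]
  refine span_mono ?_ (mem_span_greedyBasisSet_inter k r (T s))
  rintro w ⟨hwG, hw | rfl⟩
  exacts [⟨⟨w, hwG⟩, _root_.trans hw (hT s hs), hb _⟩, ⟨⟨_, hwG⟩, hT s hs, hb _⟩]

theorem strictlyTriangularizable_of_height (f : V → ℕ) (hf : ∀ v ≠ 0, f (T v) < f v) :
    StrictlyTriangularizable T := by
  let e : V ↪ ℕ × V := ⟨fun v => (f v, v), fun _ _ h => congrArg Prod.snd h⟩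
  have := (RelEmbedding.preimage e (Prod.Lex (· < ·) WellOrderingRel)).isWellOrder
  exact strictlyTriangularizable_of_isWellOrder (e ⁻¹'o Prod.Lex (· < ·) WellOrderingRel)
    fun v hv => Prod.Lex.left _ _ (hf v hv)

theorem strictlyTriangularizable_of_maxGenEigenspace_zero_eq_top
    (hT : T.maxGenEigenspace 0 = ⊤) : StrictlyTriangularizable T := by
  classical
  have hex := T.maxGenEigenspace_zero_eq_top_iff.1 hT
  refine strictlyTriangularizable_of_height (fun v => Nat.find (hex v)) fun v hv => ?_
  obtain ⟨n, hn⟩ := Nat.exists_eq_add_one_of_ne_zero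
    (by simpa [Nat.find_eq_zero] using hv : Nat.find (hex v) ≠ 0)
  rw [hn, Nat.lt_succ_iff]
  refine Nat.find_min' _ ?_
  rw [← mul_apply, ← pow_succ, ← hn, Nat.find_spec (hex v)]

theorem StrictlyTriangularizable.triangularizable (h : StrictlyTriangularizable T) :
    Triangularizable T :=
  let ⟨ι, r, b, hr, hT⟩ := h
  ⟨ι, r, b, hr, fun i => span_mono (Set.image_mono fun _ => Or.inl) (hT i)⟩

theorem StrictlyTriangularizable.maxGenEigenspace_zero_eq_top
    (h : StrictlyTriangularizable T) : T.maxGenEigenspace 0 = ⊤ :=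
  let ⟨_, _, b, _, hT⟩ := h
  b.maxGenEigenspace_zero_eq_top_of_strictlyTriangular hT

theorem Triangularizable.strictlyTriangularizable (h : Triangularizable T)
    (heig : ∀ a, T.HasEigenvalue a → a = 0) : StrictlyTriangularizable T := by
  obtain ⟨ι, r, b, hr, hT⟩ := h
  obtain ⟨c, hc⟩ := b.exists_diagonal_of_triangular hT
  refine ⟨ι, r, b, hr, fun i => ?_⟩
  simpa [heig _ (b.hasEigenvalue_diagonal hc i)] using hc i

end Triangularizable

/-- For a transformation `T` of a nonzero space `V`, the following are equivalent:
(1) `T` is topologically nilpotent in the function topology;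
(2) `V = ⋃_{i≥1} ker(T^i)`;
(3) `T` is strictly triangularizable;
(4) `T` is triangularizable and `ker(T - aI) ≠ 0` iff `a = 0`. -/
theorem topologically_nilpotent_tfae
    {k : Type u} {V : Type v} [Field k] [AddCommGroup V] [Module k V] [Nontrivial V]
    (T : Module.End k V) :
    List.TFAE
      [Filter.Tendsto (fun i : ℕ => T ^ i) Filter.atTop
          (@nhds _ (endFunctionTopology k V) 0),
        ∀ v : V, ∃ i : ℕ, 1 ≤ i ∧ (T ^ i) v = 0,
        StrictlyTriangularizable T,
        Triangularizable T ∧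
          ∀ a : k, LinearMap.ker (T - a • (1 : Module.End k V)) ≠ ⊥ ↔ a = 0] := by
  have h2 : (∀ v : V, ∃ i : ℕ, 1 ≤ i ∧ (T ^ i) v = 0) ↔ T.maxGenEigenspace 0 = ⊤ := by
    simp only [exists_pos_pow_apply_eq_zero_iff, maxGenEigenspace_zero_eq_top_iff]
  have hker (a : k) : LinearMap.ker (T - a • 1) ≠ ⊥ ↔ T.HasEigenvalue a := by
    rw [hasEigenvalue_iff, eigenspace_def]
  tfae_have 1 ↔ 2 := by
    simp only [tendsto_endFunctionTopology_iff, LinearMap.zero_apply,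
      eventually_pow_apply_eq_zero_iff, exists_pos_pow_apply_eq_zero_iff]
  tfae_have 2 → 3 := fun h => strictlyTriangularizable_of_maxGenEigenspace_zero_eq_top (h2.1 h)
  tfae_have 3 → 2 := fun h => h2.2 h.maxGenEigenspace_zero_eq_top
  tfae_have 3 → 4 := fun h => ⟨h.triangularizable, fun a => (hker a).trans
    (hasEigenvalue_iff_eq_zero_of_maxGenEigenspace_zero_eq_top h.maxGenEigenspace_zero_eq_top a)⟩
  tfae_have 4 → 3 := fun ⟨h, heig⟩ =>
    h.strictlyTriangularizable fun a ha => (heig a).1 ((hker a).2 ha)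
  tfae_finish
end

section
/- Let k be a field, V a k-vector space, and T a linear transformation of V such that p(T) = 0 for some nonconstant polynomial p(x) ∈ k[x]. Then the double centralizer of T in End_k(V) equals the unital subalgebra k[T] generated by T; moreover k[T] is closed in the function topology, so C(C(T)) = closure of k[T] = k[T]. -/
/-!
Let `m` be the minimal polynomial of `T` and `R = k[X]/(m)`. Then `V` is a faithful `R`-module
and `C(T)` is `End_R(V)`. The ring `R` is Artinian and self-injective (a quotient of a PID by a
nonzero ideal), so for a suitable finite family of vectors `v i` the embedding `R → V^n`,
`r ↦ (r • v i)`, splits: there are `R`-linear `h i : V → R` with `∑ i, h i (v i) = 1`.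
An `S` commuting with `End_R(V)` commutes with the rank-one maps `h i (·) • x`, and is therefore
multiplication by `∑ i, h i (S (v i)) ∈ R`. Closedness of `k[T]` is then automatic, since every
centralizer is closed in the function topology.
-/

universe u v

open Polynomial

open scoped Topology

theorem Module.baer_quotient_span_singleton {R : Type*} [CommRing R] [IsDomain R]
    [IsPrincipalIdealRing R] {m : R} (hm : m ≠ 0) :
    Module.Baer (R ⧸ Ideal.span {m}) (R ⧸ Ideal.span {m}) := by
  intro I g
  let π := Ideal.Quotient.mk (Ideal.span {m})
  obtain ⟨d, hd⟩ := (IsPrincipalIdealRing.principal (I.comap π)).principal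
  have hI : ∀ a, π a ∈ I ↔ d ∣ a := fun a => by
    simpa [Ideal.mem_span_singleton] using SetLike.ext_iff.1 hd a
  obtain ⟨c, hc⟩ : d ∣ m := (hI m).1 (by simp [π])
  let x₀ : I := ⟨π d, (hI d).2 dvd_rfl⟩
  obtain ⟨w, hw⟩ := Ideal.Quotient.mk_surjective (g x₀)
  -- `π c` kills `x₀`, hence also `g x₀ = π w`, so `m = d * c` divides `c * w`.
  obtain ⟨t, rfl⟩ : d ∣ w := by
    have hcx : π c • x₀ = 0 := by ext; simp [x₀, π, ← map_mul, ← hc, mul_comm c]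
    have hcw : π (c * w) = 0 := by
      rw [map_mul, hw, ← smul_eq_mul, ← map_smul, hcx, map_zero]
    obtain ⟨s, hs⟩ := Ideal.mem_span_singleton'.1 (Ideal.Quotient.eq_zero_iff_mem.1 hcw)
    exact ⟨s, mul_left_cancel₀ (right_ne_zero_of_mul (hc ▸ hm)) (by rw [← hs, hc]; ring)⟩
  refine ⟨LinearMap.toSpanSingleton _ _ (π t), fun x hx => ?_⟩
  obtain ⟨a, rfl⟩ := Ideal.Quotient.mk_surjective x
  obtain ⟨r, rfl⟩ := (hI a).1 hx
  have : (⟨π (d * r), hx⟩ : I) = π r • x₀ := by ext; simp [x₀, mul_comm]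
  rw [this, map_smul, ← hw]
  simp only [LinearMap.toSpanSingleton_apply, smul_eq_mul, map_mul, π]
  ring

theorem IsArtinianRing.exists_finset_eq_zero_of_forall_smul_eq_zero {R M : Type*} [Ring R]
    [IsArtinianRing R] [AddCommGroup M] [Module R M] [FaithfulSMul R M] :
    ∃ s : Finset M, ∀ r : R, (∀ v ∈ s, r • v = 0) → r = 0 := by
  classical
  let K : Finset M → Submodule R R := fun s =>
    ⨅ v ∈ s, LinearMap.ker (LinearMap.toSpanSingleton R M v)
  have hK : ∀ s r, r ∈ K s ↔ ∀ v ∈ s, r • v = 0 := by simp [K]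
  obtain ⟨_, ⟨s, rfl⟩, hmin⟩ := IsArtinian.set_has_minimal (Set.range K) ⟨K ∅, ∅, rfl⟩
  refine ⟨s, fun r hr => eq_of_smul_eq_smul (α := M) fun w => ?_⟩
  have hle : K (insert w s) ≤ K s := fun r hr =>
    (hK _ r).2 fun v hv => (hK _ r).1 hr v (Finset.mem_insert_of_mem hv)
  have heq : K (insert w s) = K s := hle.eq_of_not_lt (hmin _ ⟨_, rfl⟩)
  rw [zero_smul]
  exact (hK _ r).1 (heq ▸ (hK s r).2 hr) w (Finset.mem_insert_self w s)

theorem Module.Baer.exists_sum_apply_eq_one {R M ι : Type*} [CommRing R] [AddCommGroup M]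
    [Module R M] [Fintype ι] [DecidableEq ι] (hR : Module.Baer R R) (v : ι → M)
    (hv : ∀ r : R, (∀ i, r • v i = 0) → r = 0) :
    ∃ h : ι → M →ₗ[R] R, ∑ i, h i (v i) = 1 := by
  let f : R →ₗ[R] ι → M := LinearMap.pi fun i => LinearMap.toSpanSingleton R M (v i)
  have hf : Function.Injective f := by
    rw [← LinearMap.ker_eq_bot, LinearMap.ker_eq_bot']
    exact fun r hr => hv r fun i => congr_fun hr i
  obtain ⟨g, hg⟩ := hR.extension_property f hf LinearMap.id
  refine ⟨fun i => g ∘ₗ LinearMap.single R (fun _ => M) i, ?_⟩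
  have hfv : f 1 = v := by ext; simp [f]
  simp only [LinearMap.comp_apply, LinearMap.coe_single, ← map_sum, Finset.univ_sum_single, ← hfv]
  exact LinearMap.congr_fun hg 1

theorem AddMonoidHom.eq_smul_of_forall_commute {R M ι : Type*} [CommRing R] [AddCommGroup M]
    [Module R M] [Fintype ι] (v : ι → M) (h : ι → M →ₗ[R] R) (hvh : ∑ i, h i (v i) = 1)
    (S : M →+ M) (hS : ∀ (A : M →ₗ[R] M) (x : M), S (A x) = A (S x)) (x : M) :
    S x = (∑ i, h i (S (v i))) • x := by
  -- `x = ∑ i, A i (v i)` for the rank-one maps `A i = h i (·) • x`.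
  let A : ι → M →ₗ[R] M := fun i => LinearMap.toSpanSingleton R M x ∘ₗ h i
  calc S x = S (∑ i, A i (v i)) := by simp [A, ← Finset.sum_smul, hvh]
    _ = ∑ i, A i (S (v i)) := by simp only [map_sum, hS]
    _ = (∑ i, h i (S (v i))) • x := by simp [A, Finset.sum_smul]

theorem IsArtinianRing.exists_eq_smul_of_forall_commute {R M : Type*} [CommRing R]
    [IsArtinianRing R] (hR : Module.Baer R R) [AddCommGroup M] [Module R M] [FaithfulSMul R M]
    (S : M →+ M) (hS : ∀ (A : M →ₗ[R] M) (x : M), S (A x) = A (S x)) :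
    ∃ r : R, ∀ x, S x = r • x := by
  classical
  obtain ⟨s, hs⟩ := exists_finset_eq_zero_of_forall_smul_eq_zero (R := R) (M := M)
  obtain ⟨h, hh⟩ := hR.exists_sum_apply_eq_one (fun v : s => (v : M))
    fun r hr => hs r fun v hv => hr ⟨v, hv⟩
  exact ⟨_, S.eq_smul_of_forall_commute _ h hh hS⟩

theorem Module.End.mem_adjoin_of_mem_centralizer_centralizer {k V : Type*} [Field k]
    [AddCommGroup V] [Module k V] {T : Module.End k V} (hT : IsIntegral k T) {S : Module.End k V}
    (hS : S ∈ Subalgebra.centralizer k (Subalgebra.centralizer k {T} : Set (Module.End k V))) :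
    S ∈ Algebra.adjoin k {T} := by
  let R := k[X] ⧸ Ideal.span {minpoly k T}
  let φ : R →ₐ[k] Module.End k V := Ideal.Quotient.liftₐ _ (aeval T) fun a ha => by
    obtain ⟨b, rfl⟩ := Ideal.mem_span_singleton'.1 ha
    simp
  let _ : Module R V := Module.compHom V φ.toRingHom
  have hsmul : ∀ (q : k[X]) (x : V), (Ideal.Quotient.mk _ q : R) • x = aeval T q x :=
    fun _ _ => rfl
  have : IsScalarTower k R V := ⟨fun c r x => by
    change φ (c • r) x = c • φ r x
    rw [map_smul, LinearMap.smul_apply]⟩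
  have : FaithfulSMul R V := ⟨fun {r₁ r₂} h => by
    obtain ⟨q, hq⟩ := Ideal.Quotient.mk_surjective (r₁ - r₂)
    have hTq : aeval T q = 0 := LinearMap.ext fun x => by
      rw [← hsmul, hq, sub_smul, h, sub_self]; rfl
    rw [← sub_eq_zero, ← hq, Ideal.Quotient.eq_zero_iff_mem, Ideal.mem_span_singleton]
    exact minpoly.dvd k T hTq⟩
  have : Module.Finite k R := (minpoly.monic hT).finite_quotient
  have : IsArtinianRing R := IsArtinianRing.of_finite k R
  have hcomm : ∀ (A : V →ₗ[R] V) (x : V), S (A x) = A (S x) := by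
    intro A x
    have hA : A.restrictScalars k ∈ Subalgebra.centralizer k {T} := by
      rw [Subalgebra.mem_centralizer_iff]
      rintro _ rfl
      ext y
      simpa [hsmul] using (A.map_smul (Ideal.Quotient.mk _ X) y).symm
    exact (LinearMap.congr_fun ((Subalgebra.mem_centralizer_iff k).1 hS _ hA) x).symm
  obtain ⟨r, hr⟩ := IsArtinianRing.exists_eq_smul_of_forall_commute
    (Module.baer_quotient_span_singleton (minpoly.ne_zero hT)) S.toAddMonoidHom hcomm
  obtain ⟨q, rfl⟩ := Ideal.Quotient.mk_surjective r
  have hSq : S = aeval T q := LinearMap.ext fun x => (hr x).trans (hsmul q x)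
  exact hSq ▸ aeval_mem_adjoin_singleton k T

theorem isClosed_centralizer_endFunctionTopology {k V : Type*} [Field k] [AddCommGroup V]
    [Module k V] (X : Set (Module.End k V)) :
    IsClosed[endFunctionTopology k V] (Set.centralizer X) := by
  let _ : TopologicalSpace V := ⊥
  have : DiscreteTopology V := ⟨rfl⟩
  let _ := endFunctionTopology k V
  have heval : ∀ v : V, Continuous fun S : Module.End k V => S v :=
    fun v => (continuous_apply v).comp continuous_induced_dom
  have hX : Set.centralizer X = ⋂ A ∈ X, ⋂ v : V, {S : Module.End k V | A (S v) = S (A v)} := by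
    ext S
    simp [Set.mem_centralizer_iff, LinearMap.ext_iff]
  rw [hX]
  exact isClosed_biInter fun A _ => isClosed_iInter fun v =>
    isClosed_eq (continuous_of_discreteTopology.comp (heval v)) (heval (A v))

/-- If `T` satisfies a nonconstant polynomial, then the double centralizer of `T` in
`End_k(V)` equals `k[T]`, the unital subalgebra generated by `T`; moreover `k[T]` is closed
in the function topology. -/
theorem double_centralizer_eq_adjoin
    {k : Type u} {V : Type v} [Field k] [AddCommGroup V] [Module k V]
    (T : Module.End k V) (p : k[X]) (hp : p.natDegree ≠ 0) (hpT : aeval T p = 0) :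
    ((Subalgebra.centralizer k
        ((Subalgebra.centralizer k ({T} : Set (Module.End k V)) :
          Subalgebra k (Module.End k V)) : Set (Module.End k V))) :
        Set (Module.End k V)) =
      ((Algebra.adjoin k ({T} : Set (Module.End k V))) : Set (Module.End k V)) ∧
    @closure _ (endFunctionTopology k V)
        ((Algebra.adjoin k ({T} : Set (Module.End k V))) : Set (Module.End k V)) =
      ((Algebra.adjoin k ({T} : Set (Module.End k V))) : Set (Module.End k V)) := by
  have hT : IsIntegral k T :=
    isAlgebraic_iff_isIntegral.1 ⟨p, fun h => hp (by simp [h]), hpT⟩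
  have hcc : ((Subalgebra.centralizer k (Subalgebra.centralizer k {T} : Set (Module.End k V))) :
      Set (Module.End k V)) = Algebra.adjoin k {T} :=
    le_antisymm (fun _ hS => Module.End.mem_adjoin_of_mem_centralizer_centralizer hT hS)
      (Algebra.adjoin_le_centralizer_centralizer k {T})
  refine ⟨hcc, ?_⟩
  rw [← hcc]
  exact @IsClosed.closure_eq _ (endFunctionTopology k V) _
    (isClosed_centralizer_endFunctionTopology _)
end
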